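/- arXiv:1808.05849 — 12 statements merged into one kernel-verified Lean document; each statement's English description precedes it below -/
import Mathlib

section
/- For every R > 0: (i) −R²(1−2t)² + 2Rt − t² > 0 if and only if t⁻(R) < t < t⁺(R); (ii) 0 < t⁻(R) < t⁺(R) ≤ 1, and t⁺(R) = 1 if and only if R = 1; (iii) t⁻(R) < 1/2 for all R > 0, while t⁺(R) > 1/2 if and only if R > 1/4. In particular, for R > 1/4 (hence for all R ≥ 1) one has t⁻(R) < 1/2 < t⁺(R) ≤ 1. -/
/-- `t⁻(R) = R/(2R+1+2√R)`. -/
noncomputable def tminus (R : ℝ) : ℝ := R / (2*R + 1 + 2*Real.sqrt R)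

/-- `t⁺(R) = R/(2R+1−2√R)`. -/
noncomputable def tplus (R : ℝ) : ℝ := R / (2*R + 1 - 2*Real.sqrt R)

/-- For every `R > 0`:
(i) `−R²(1−2t)² + 2Rt − t² > 0` iff `t⁻(R) < t < t⁺(R)`;
(ii) `0 < t⁻(R) < t⁺(R) ≤ 1`, with `t⁺(R) = 1` iff `R = 1`;
(iii) `t⁻(R) < 1/2` always, and `t⁺(R) > 1/2` iff `R > 1/4`.
In particular, for `R > 1/4` one has `t⁻(R) < 1/2 < t⁺(R) ≤ 1`. -/
theorem stmt_1 (R : ℝ) (hR : 0 < R) :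
    (∀ t : ℝ, 0 < -R^2*(1 - 2*t)^2 + 2*R*t - t^2 ↔ tminus R < t ∧ t < tplus R) ∧
    (0 < tminus R ∧ tminus R < tplus R ∧ tplus R ≤ 1 ∧ (tplus R = 1 ↔ R = 1)) ∧
    (tminus R < 1/2 ∧ (1/2 < tplus R ↔ 1/4 < R)) ∧
    (1/4 < R → tminus R < 1/2 ∧ 1/2 < tplus R ∧ tplus R ≤ 1) := by
  set s := Real.sqrt R with hsdef
  have hs2 : s ^ 2 = R := Real.sq_sqrt hR.le
  have hs0 : 0 < s := Real.sqrt_pos.mpr hR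
  have hdm : 0 < 2*R + 1 + 2*s := by nlinarith
  have hdp : 0 < 2*R + 1 - 2*s := by nlinarith [sq_nonneg (s - 1)]
  have htm : tminus R = R / (2*R + 1 + 2*s) := rfl
  have htp : tplus R = R / (2*R + 1 - 2*s) := rfl
  refine ⟨?_, ⟨?_, ?_, ?_, ?_⟩, ⟨?_, ?_⟩, ?_⟩
  · intro t
    rw [htm, htp, div_lt_iff₀ hdm, lt_div_iff₀ hdp]
    constructor
    · intro h
      have key : (t*(2*R+1+2*s) - R) * (t*(2*R+1-2*s) - R) < 0 := by
        nlinarith [sq_nonneg t, hs2]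
      constructor
      · by_contra hA
        push_neg at hA
        have hB : 0 < t*(2*R+1-2*s) - R := by
          by_contra hB
          push_neg at hB
          nlinarith [mul_nonneg (sub_nonneg.mpr hA) (neg_nonneg.mpr hB)]
        have ht : 0 < t := by
          by_contra ht
          push_neg at ht
          nlinarith [mul_nonneg (neg_nonneg.mpr ht) hdp.le]
        nlinarith [mul_pos ht hs0]
      · by_contra hB
        push_neg at hB
        have hA : t*(2*R+1+2*s) - R < 0 := by
          by_contra hA
          push_neg at hA
          nlinarith [mul_nonneg hA (sub_nonneg.mpr hB)]
        have ht : 0 < t := by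
          by_contra ht
          push_neg at ht
          nlinarith [mul_nonneg (neg_nonneg.mpr ht) hdp.le]
        nlinarith [mul_pos ht hs0]
    · rintro ⟨h1, h2⟩
      nlinarith [mul_pos (sub_pos.mpr h1) (sub_pos.mpr h2)]
  · exact div_pos hR hdm
  · rw [htm, htp]
    apply div_lt_div_of_pos_left hR hdp
    nlinarith
  · rw [htp, div_le_one hdp]
    nlinarith [sq_nonneg (s - 1)]
  · rw [htp, div_eq_one_iff_eq (ne_of_gt hdp)]
    constructor
    · intro h
      have hs1 : s = 1 := by nlinarith [sq_nonneg (s - 1)]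
      nlinarith
    · intro h
      have hs1 : s = 1 := by rw [hsdef, h]; exact Real.sqrt_one
      rw [h, hs1]; ring
  · rw [htm, div_lt_iff₀ hdm]; nlinarith
  · rw [htp, lt_div_iff₀ hdp]
    constructor
    · intro h; nlinarith
    · intro h
      have : 1/2 < s := by nlinarith [sq_nonneg (s - 1/2)]
      nlinarith
  · intro h
    refine ⟨by rw [htm, div_lt_iff₀ hdm]; nlinarith, ?_, by rw [htp, div_le_one hdp]; nlinarith [sq_nonneg (s-1)]⟩
    rw [htp, lt_div_iff₀ hdp]
    have : 1/2 < s := by nlinarith [sq_nonneg (s - 1/2)]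
    nlinarith
end

section
/- Define σ(R,t) := (1/R, t/(R+t−Rt)) for R > 0 and t ∈ (0,1). Then: (i) R+t−Rt > 0, and σ maps {(R,t) : R > 0, 0 < t < 1} into itself; (ii) σ is an involution, i.e. σ(σ(R,t)) = (R,t); (iii) writing t' := t/(R+t−Rt), one has the identity −(1/R²)(1−2t')² + 2t'/R − t'² = (−R²(1−2t)² + 2Rt − t²)/(R²(R+t−Rt)²); in particular t⁻(R) < t < t⁺(R) if and only if t⁻(1/R) < t' < t⁺(1/R). -/
lemma key (R t : ℝ) (hR : 0 < R) (ht : 0 < t) :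
    (tminus R < t ∧ t < tplus R) ↔ 0 < -R^2*(1 - 2*t)^2 + 2*R*t - t^2 := by
  set s := Real.sqrt R with hsdef
  have hs : s^2 = R := Real.sq_sqrt hR.le
  have hs0 : 0 < s := Real.sqrt_pos.mpr hR
  have hdm : 0 < 2*R + 1 + 2*s := by nlinarith
  have hdp : 0 < 2*R + 1 - 2*s := by nlinarith [sq_nonneg (s-1)]
  unfold tminus tplus
  rw [div_lt_iff₀ hdm, lt_div_iff₀ hdp]
  constructor
  · rintro ⟨h1, h2⟩
    nlinarith [mul_pos (by linarith : 0 < t*(2*R+1+2*s) - R)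
      (by linarith : 0 < R - t*(2*R+1-2*s))]
  · intro h
    constructor
    · by_contra hc; push_neg at hc
      nlinarith [mul_pos ht hs0]
    · by_contra hc; push_neg at hc
      nlinarith [mul_pos ht hs0]

/-- For `R > 0` and `t ∈ (0,1)`, with `σ(R,t) := (1/R, t/(R+t−Rt))` and
`t' := t/(R+t−Rt)`:
(i) `R+t−Rt > 0` and `σ` maps `{R > 0, 0 < t < 1}` into itself;
(ii) `σ` is an involution;
(iii) `−(1/R²)(1−2t')² + 2t'/R − t'² = (−R²(1−2t)² + 2Rt − t²)/(R²(R+t−Rt)²)`,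
and `t⁻(R) < t < t⁺(R)` iff `t⁻(1/R) < t' < t⁺(1/R)`. -/
theorem stmt_3 (R t : ℝ) (hR : 0 < R) (ht : 0 < t ∧ t < 1) :
    (0 < R + t - R*t) ∧
    (0 < 1/R ∧ 0 < t/(R + t - R*t) ∧ t/(R + t - R*t) < 1) ∧
    (1/(1/R) = R ∧
      (t/(R + t - R*t)) / (1/R + t/(R + t - R*t) - (1/R)*(t/(R + t - R*t))) = t) ∧
    (-(1/R^2)*(1 - 2*(t/(R + t - R*t)))^2 + 2*(t/(R + t - R*t))/R - (t/(R + t - R*t))^2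
      = (-R^2*(1 - 2*t)^2 + 2*R*t - t^2) / (R^2*(R + t - R*t)^2)) ∧
    ((tminus R < t ∧ t < tplus R) ↔
      (tminus (1/R) < t/(R + t - R*t) ∧ t/(R + t - R*t) < tplus (1/R))) := by
  obtain ⟨ht0, ht1⟩ := ht
  have hD : 0 < R + t - R*t := by nlinarith
  have ht' : 0 < t/(R + t - R*t) := div_pos ht0 hD
  have hiii : -(1/R^2)*(1 - 2*(t/(R + t - R*t)))^2 + 2*(t/(R + t - R*t))/R
      - (t/(R + t - R*t))^2
      = (-R^2*(1 - 2*t)^2 + 2*R*t - t^2) / (R^2*(R + t - R*t)^2) := by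
    field_simp
    ring
  refine ⟨hD, ⟨by positivity, ht', ?_⟩, ⟨one_div_one_div R, ?_⟩, hiii, ?_⟩
  · rw [div_lt_one hD]; nlinarith
  · rw [div_eq_iff]
    · rw [show 1/R + t/(R + t - R*t) - (1/R)*(t/(R + t - R*t)) = (R + t - R*t + R*t - t) / (R*(R + t - R*t)) by field_simp, show R + t - R*t + R*t - t = R by ring]
      rw [div_mul_cancel_left₀ hR.ne']
      ring
    · have : 1/R + t/(R + t - R*t) - (1/R)*(t/(R + t - R*t))
          = (R + t - R*t + R*t - t) / (R*(R + t - R*t)) := by field_simp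
      rw [this]
      have : R + t - R*t + R*t - t = R := by ring
      rw [this]
      positivity
  · rw [key R t hR ht0, key (1/R) _ (by positivity) ht']
    have heq : -(1/R)^2*(1 - 2*(t/(R + t - R*t)))^2 + 2*(1/R)*(t/(R + t - R*t))
        - (t/(R + t - R*t))^2
        = (-R^2*(1 - 2*t)^2 + 2*R*t - t^2) / (R^2*(R + t - R*t)^2) := by
      rw [← hiii]; ring
    rw [heq, lt_div_iff₀ (by positivity : (0:ℝ) < R^2*(R + t - R*t)^2), zero_mul]
end

section
/- Let R > 0, t ∈ (0,1), and l, h ∈ ℝ. Then P(p) := B(p) − (h − A(p))² is a polynomial in p of degree exactly 3, whose coefficient of p³ equals 2t(t−1)/R; in particular the leading coefficient is negative and independent of l and h (the degree-4 terms of B(p) and of (h−A(p))² cancel). -/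
/-- Let `R > 0`, `t ∈ (0,1)`, `l, h ∈ ℝ`. With
`A(p) := (1/R)(Rl(1−2t) + (t − R(1−2t) + lt)p − tp²)` and
`B(p) := (t²/R²)p(p−l)(p−2R)(p−l−2)`, the function `P(p) := B(p) − (h−A(p))²` is a
polynomial in `p` of degree exactly `3` with leading coefficient `2t(t−1)/R`; in
particular the leading coefficient is negative and independent of `l` and `h`. -/
theorem stmt_5 (R t l h : ℝ) (hR : 0 < R) (ht : 0 < t ∧ t < 1)
    (A B P : ℝ → ℝ)
    (hA : ∀ p, A p = (1/R)*(R*l*(1-2*t) + (t - R*(1-2*t) + l*t)*p - t*p^2))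
    (hB : ∀ p, B p = (t^2/R^2) * (p*(p-l)*(p-2*R)*(p-l-2)))
    (hP : ∀ p, P p = B p - (h - A p)^2) :
    ∃ c₂ c₁ c₀ : ℝ,
      (∀ p : ℝ, P p = (2*t*(t-1)/R) * p^3 + c₂*p^2 + c₁*p + c₀) ∧
      2*t*(t-1)/R < 0 := by
  obtain ⟨ht0, ht1⟩ := ht
  have hRne : R ≠ 0 := ne_of_gt hR
  refine ⟨-t^2/R^2 + 2*t/R - 2*t*h/R + 4*t*l/R - 4*t^2*l/R - 1 + 4*t - 4*t^2,
    2*t*h/R - 2*t*l/R + 2*t*l*h/R - 2*t*l^2/R + 2*t^2*l^2/R - 2*h + 2*l + 4*t*h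
      - 8*t*l + 8*t^2*l,
    -h^2 + 2*l*h - l^2 - 4*t*l*h + 4*t*l^2 - 4*t^2*l^2, ?_, ?_⟩
  · intro p
    rw [hP, hB, hA]
    field_simp
    ring
  · have h1 : 2*t*(t-1) < 0 := by nlinarith
    exact div_neg_of_neg_of_pos h1 hR
end

section
/- Let R > 0, t ∈ (0,1), −2 < l < 2R, and h ∈ ℝ, and assume there exists p* with max(0,l) < p* < min(l+2,2R) and P(p*) > 0, and h ∉ {A(0), A(l), A(2R), A(l+2)}. Let ζ₂ < ζ₃ be the two roots of P in (max(0,l), min(l+2,2R)). Then B(ζ₂) > 0 and B(ζ₃) > 0, and: (h − A(ζ₂))/√(B(ζ₂)) = 1 if h > A(max(0,l)) and = −1 if h < A(max(0,l)); likewise (h − A(ζ₃))/√(B(ζ₃)) = 1 if h > A(min(l+2,2R)) and = −1 if h < A(min(l+2,2R)). -/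
private lemma cubic_fac (c3 c2 c1 c0 x1 x2 x3 : ℝ) (h12 : x1 ≠ x2) (h13 : x1 ≠ x3)
    (h23 : x2 ≠ x3)
    (h1 : c3*x1^3+c2*x1^2+c1*x1+c0 = 0)
    (h2 : c3*x2^3+c2*x2^2+c1*x2+c0 = 0)
    (h3 : c3*x3^3+c2*x3^2+c1*x3+c0 = 0) (x : ℝ) :
    c3*x^3+c2*x^2+c1*x+c0 = c3*(x-x1)*(x-x2)*(x-x3) := by
  have d12 : x1 - x2 ≠ 0 := sub_ne_zero.mpr h12
  have d13 : x1 - x3 ≠ 0 := sub_ne_zero.mpr h13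
  have d23 : x2 - x3 ≠ 0 := sub_ne_zero.mpr h23
  have e12 : c3*(x1^2+x1*x2+x2^2) + c2*(x1+x2) + c1 = 0 := by
    have hm : (x1-x2) * (c3*(x1^2+x1*x2+x2^2) + c2*(x1+x2) + c1) = 0 := by
      linear_combination h1 - h2
    exact (mul_eq_zero.mp hm).resolve_left d12
  have e13 : c3*(x1^2+x1*x3+x3^2) + c2*(x1+x3) + c1 = 0 := by
    have hm : (x1-x3) * (c3*(x1^2+x1*x3+x3^2) + c2*(x1+x3) + c1) = 0 := by
      linear_combination h1 - h3
    exact (mul_eq_zero.mp hm).resolve_left d13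
  have e : c3*(x1+x2+x3) + c2 = 0 := by
    have hm : (x2-x3) * (c3*(x1+x2+x3) + c2) = 0 := by
      linear_combination e12 - e13
    exact (mul_eq_zero.mp hm).resolve_left d23
  have hc2 : c2 = -c3*(x1+x2+x3) := by linear_combination e
  have hc1 : c1 = c3*(x1*x2+x1*x3+x2*x3) := by linear_combination e12 - (x1+x2)*e
  have hc0 : c0 = -c3*(x1*x2*x3) := by linear_combination h1 - x1^2*hc2 - x1*hc1
  rw [hc2, hc1, hc0]; ring

set_option maxHeartbeats 1000000 in
/-- Let `R > 0`, `t ∈ (0,1)`, `−2 < l < 2R`, `h ∈ ℝ`; assume there is `p₀` with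
`max(0,l) < p₀ < min(l+2,2R)` and `P(p₀) > 0`, and `h ∉ {A(0),A(l),A(2R),A(l+2)}`.
Let `ζ₂ < ζ₃` be the two roots of `P` in `(max(0,l), min(l+2,2R))`. Then
`B(ζ₂) > 0`, `B(ζ₃) > 0`, and `(h−A(ζ₂))/√(B(ζ₂)) = 1` if `h > A(max(0,l))`,
`= −1` if `h < A(max(0,l))`; likewise `(h−A(ζ₃))/√(B(ζ₃)) = 1` if
`h > A(min(l+2,2R))` and `= −1` if `h < A(min(l+2,2R))`. -/
theorem stmt_7 (R t l h : ℝ) (hR : 0 < R) (ht : 0 < t ∧ t < 1)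
    (hl : -2 < l) (hl' : l < 2*R)
    (A B P : ℝ → ℝ)
    (hA : ∀ p, A p = (1/R)*(R*l*(1-2*t) + (t - R*(1-2*t) + l*t)*p - t*p^2))
    (hB : ∀ p, B p = (t^2/R^2) * (p*(p-l)*(p-2*R)*(p-l-2)))
    (hP : ∀ p, P p = B p - (h - A p)^2)
    (p₀ : ℝ) (hp₀ : max 0 l < p₀ ∧ p₀ < min (l+2) (2*R) ∧ 0 < P p₀)
    (hh : h ≠ A 0 ∧ h ≠ A l ∧ h ≠ A (2*R) ∧ h ≠ A (l+2))
    (ζ₂ ζ₃ : ℝ) (hζ₂ : max 0 l < ζ₂) (hζ₂₃ : ζ₂ < ζ₃) (hζ₃ : ζ₃ < min (l+2) (2*R))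
    (hroot₂ : P ζ₂ = 0) (hroot₃ : P ζ₃ = 0) :
    0 < B ζ₂ ∧ 0 < B ζ₃ ∧
    (A (max 0 l) < h → (h - A ζ₂) / Real.sqrt (B ζ₂) = 1) ∧
    (h < A (max 0 l) → (h - A ζ₂) / Real.sqrt (B ζ₂) = -1) ∧
    (A (min (l+2) (2*R)) < h → (h - A ζ₃) / Real.sqrt (B ζ₃) = 1) ∧
    (h < A (min (l+2) (2*R)) → (h - A ζ₃) / Real.sqrt (B ζ₃) = -1) := by
  obtain ⟨ht0, ht1⟩ := ht
  have hRne : R ≠ 0 := ne_of_gt hR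
  set m : ℝ := max 0 l with hm_def
  set M : ℝ := min (l+2) (2*R) with hM_def
  -- coefficients of the cubic P
  have hex : ∃ c3 c2 c1 c0 : ℝ, c3 = -2*(t/R)*(1-t) ∧
      ∀ x, P x = c3*x^3 + c2*x^2 + c1*x + c0 := by
    refine ⟨-2*(t/R)*(1-t),
      (t/R)^2*(l^2+2*l+4*R*l+4*R) - (((t - R*(1-2*t) + l*t)/R)^2 + 2*(t/R)*(h - l*(1-2*t))),
      -2*(t/R)^2*R*l*(l+2) + 2*(h - l*(1-2*t))*((t - R*(1-2*t) + l*t)/R),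
      -(h - l*(1-2*t))^2, rfl, ?_⟩
    intro x
    rw [hP, hB, hA]
    field_simp
    ring
  obtain ⟨c3, c2, c1, c0, hc3eq, hPoly⟩ := hex
  have hc3neg : c3 < 0 := by
    have h1 : 0 < (t/R) * (1-t) := mul_pos (div_pos ht0 hR) (by linarith)
    rw [hc3eq]; nlinarith
  -- continuity
  have hAfun : A = fun p => (1/R)*(R*l*(1-2*t) + (t - R*(1-2*t) + l*t)*p - t*p^2) :=
    funext hA
  have contA : Continuous A := by rw [hAfun]; fun_prop
  have hPfun : P = fun x => c3*x^3 + c2*x^2 + c1*x + c0 := funext hPoly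
  have contP : Continuous P := by rw [hPfun]; fun_prop
  -- basic interval facts
  have hmM : m < M := lt_trans hp₀.1 hp₀.2.1
  have hζ₂M : ζ₂ < M := lt_trans hζ₂₃ hζ₃
  -- B positive on the open interval
  have hBpos : ∀ p, m < p → p < M → 0 < B p := by
    intro p h1 h2
    have hp : 0 < p := lt_of_le_of_lt (le_max_left 0 l) h1
    have hpl : 0 < p - l := by
      have := lt_of_le_of_lt (le_max_right 0 l) h1; linarith
    have h2R : p - 2*R < 0 := by
      have := lt_of_lt_of_le h2 (min_le_right (l+2) (2*R)); linarith
    have hl2 : p - l - 2 < 0 := by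
      have := lt_of_lt_of_le h2 (min_le_left (l+2) (2*R)); linarith
    have hprod : 0 < p*(p-l)*((p-2*R)*(p-l-2)) :=
      mul_pos (mul_pos hp hpl) (mul_pos_of_neg_of_neg h2R hl2)
    have ht2 : 0 < t^2/R^2 := by positivity
    rw [hB]; nlinarith
  -- P is negative at the endpoints m and M
  have hPm : P m < 0 := by
    have hBm : B m = 0 := by
      rcases max_choice 0 l with hc | hc <;> rw [hm_def, hc, hB] <;> ring
    have hne : h - A m ≠ 0 := by
      rcases max_choice 0 l with hc | hc <;> rw [hm_def, hc]
      · exact sub_ne_zero.mpr hh.1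
      · exact sub_ne_zero.mpr hh.2.1
    have hsq : 0 < (h - A m)^2 := (sq_nonneg _).lt_of_ne (Ne.symm (pow_ne_zero 2 hne))
    rw [hP]; linarith [hBm, hsq]
  have hPM : P M < 0 := by
    have hBM : B M = 0 := by
      rcases min_choice (l+2) (2*R) with hc | hc <;> rw [hM_def, hc, hB] <;> ring
    have hne : h - A M ≠ 0 := by
      rcases min_choice (l+2) (2*R) with hc | hc <;> rw [hM_def, hc]
      · exact sub_ne_zero.mpr hh.2.2.2
      · exact sub_ne_zero.mpr hh.2.2.1
    have hsq : 0 < (h - A M)^2 := (sq_nonneg _).lt_of_ne (Ne.symm (pow_ne_zero 2 hne))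
    rw [hP]; linarith [hBM, hsq]
  -- squares at the roots
  have sq₂ : (h - A ζ₂)^2 = B ζ₂ := by have := hP ζ₂; rw [hroot₂] at this; linarith
  have sq₃ : (h - A ζ₃)^2 = B ζ₃ := by have := hP ζ₃; rw [hroot₃] at this; linarith
  have hB₂ : 0 < B ζ₂ := hBpos ζ₂ hζ₂ hζ₂M
  have hB₃ : 0 < B ζ₃ := hBpos ζ₃ (lt_trans hζ₂ hζ₂₃) hζ₃
  have ne₂ : h - A ζ₂ ≠ 0 := by
    intro h0; rw [h0] at sq₂; simp at sq₂; linarith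
  have ne₃ : h - A ζ₃ ≠ 0 := by
    intro h0; rw [h0] at sq₃; simp at sq₃; linarith
  -- the key contradiction machine: a third root of P above m is impossible
  have three_roots : ∀ r, m < r → r ≠ ζ₂ → r ≠ ζ₃ → P r = 0 → False := by
    intro r hmr hr2 hr3 hPr
    have e1 : c3*r^3+c2*r^2+c1*r+c0 = 0 := by rw [← hPoly r]; exact hPr
    have e2 : c3*ζ₂^3+c2*ζ₂^2+c1*ζ₂+c0 = 0 := by rw [← hPoly ζ₂]; exact hroot₂
    have e3 : c3*ζ₃^3+c2*ζ₃^2+c1*ζ₃+c0 = 0 := by rw [← hPoly ζ₃]; exact hroot₃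
    have hfac := cubic_fac c3 c2 c1 c0 r ζ₂ ζ₃ hr2 hr3 (ne_of_lt hζ₂₃) e1 e2 e3 m
    have f1 : m - r < 0 := by linarith
    have f2 : m - ζ₂ < 0 := by linarith
    have f3 : m - ζ₃ < 0 := by linarith [lt_trans hζ₂ hζ₂₃]
    have hpos : 0 < c3*(m-r)*(m-ζ₂)*(m-ζ₃) := by
      have key : 0 < (c3*(m-r)) * ((m-ζ₂)*(m-ζ₃)) :=
        mul_pos (mul_pos_of_neg_of_neg hc3neg f1) (mul_pos_of_neg_of_neg f2 f3)
      have heq : c3*(m-r)*(m-ζ₂)*(m-ζ₃) = (c3*(m-r)) * ((m-ζ₂)*(m-ζ₃)) := by ring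
      linarith [key, heq.ge, heq.le]
    have : P m = c3*(m-r)*(m-ζ₂)*(m-ζ₃) := by rw [hPoly m]; exact hfac
    linarith
  -- no solution of A q = h in (m, ζ₂)
  have contra_low : ∀ q, m < q → q < ζ₂ → A q = h → False := by
    intro q h1 h2 hq
    have hPq : 0 < P q := by
      rw [hP, hq]; simp
      exact hBpos q h1 (lt_trans h2 hζ₂M)
    obtain ⟨r, hr, hPr⟩ := intermediate_value_Ioo (le_of_lt h1) contP.continuousOn
      (Set.mem_Ioo.mpr ⟨hPm, hPq⟩)
    exact three_roots r hr.1 (ne_of_lt (lt_trans hr.2 h2)) (ne_of_lt (lt_trans (lt_trans hr.2 h2) hζ₂₃)) hPr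
  -- no solution of A q = h in (ζ₃, M)
  have contra_high : ∀ q, ζ₃ < q → q < M → A q = h → False := by
    intro q h1 h2 hq
    have hPq : 0 < P q := by
      rw [hP, hq]; simp
      exact hBpos q (lt_trans (lt_trans hζ₂ hζ₂₃) h1) h2
    obtain ⟨r, hr, hPr⟩ := intermediate_value_Ioo' (le_of_lt h2) contP.continuousOn
      (Set.mem_Ioo.mpr ⟨hPM, hPq⟩)
    exact three_roots r (lt_trans (lt_trans hζ₂ hζ₂₃) (lt_trans h1 hr.1))
      (ne_of_gt (lt_trans hζ₂₃ (lt_trans h1 hr.1))) (ne_of_gt (lt_trans h1 hr.1)) hPr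
  -- sign determinations
  have sign₂pos : A m < h → 0 < h - A ζ₂ := by
    intro hAm
    by_contra hcon
    push_neg at hcon
    have hlt : h < A ζ₂ := lt_of_le_of_ne (by linarith) (fun e => ne₂ (sub_eq_zero_of_eq e))
    obtain ⟨q, hq, hAq⟩ := intermediate_value_Ioo (le_of_lt hζ₂) contA.continuousOn
      (Set.mem_Ioo.mpr ⟨hAm, hlt⟩)
    exact contra_low q hq.1 hq.2 hAq
  have sign₂neg : h < A m → h - A ζ₂ < 0 := by
    intro hAm
    by_contra hcon
    push_neg at hcon
    have hlt : A ζ₂ < h := lt_of_le_of_ne (by linarith) (fun e => ne₂ (by rw [e]; ring))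
    obtain ⟨q, hq, hAq⟩ := intermediate_value_Ioo' (le_of_lt hζ₂) contA.continuousOn
      (Set.mem_Ioo.mpr ⟨hlt, hAm⟩)
    exact contra_low q hq.1 hq.2 hAq
  have sign₃pos : A M < h → 0 < h - A ζ₃ := by
    intro hAM
    by_contra hcon
    push_neg at hcon
    have hlt : h < A ζ₃ := lt_of_le_of_ne (by linarith) (fun e => ne₃ (sub_eq_zero_of_eq e))
    obtain ⟨q, hq, hAq⟩ := intermediate_value_Ioo' (le_of_lt hζ₃) contA.continuousOn
      (Set.mem_Ioo.mpr ⟨hAM, hlt⟩)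
    exact contra_high q hq.1 hq.2 hAq
  have sign₃neg : h < A M → h - A ζ₃ < 0 := by
    intro hAM
    by_contra hcon
    push_neg at hcon
    have hlt : A ζ₃ < h := lt_of_le_of_ne (by linarith) (fun e => ne₃ (by rw [e]; ring))
    obtain ⟨q, hq, hAq⟩ := intermediate_value_Ioo (le_of_lt hζ₃) contA.continuousOn
      (Set.mem_Ioo.mpr ⟨hlt, hAM⟩)
    exact contra_high q hq.1 hq.2 hAq
  -- conclude
  have sqrt₂ : Real.sqrt (B ζ₂) = |h - A ζ₂| := by
    rw [← sq₂, Real.sqrt_sq_eq_abs]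
  have sqrt₃ : Real.sqrt (B ζ₃) = |h - A ζ₃| := by
    rw [← sq₃, Real.sqrt_sq_eq_abs]
  refine ⟨hB₂, hB₃, ?_, ?_, ?_, ?_⟩
  · intro hAm
    have hd := sign₂pos hAm
    rw [sqrt₂, abs_of_pos hd, div_self (ne_of_gt hd)]
  · intro hAm
    have hd := sign₂neg hAm
    rw [sqrt₂, abs_of_neg hd]
    rw [div_eq_iff (ne_of_gt (by linarith : (0:ℝ) < -(h - A ζ₂)))]; ring
  · intro hAM
    have hd := sign₃pos hAM
    rw [sqrt₃, abs_of_pos hd, div_self (ne_of_gt hd)]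
  · intro hAM
    have hd := sign₃neg hAM
    rw [sqrt₃, abs_of_neg hd]
    rw [div_eq_iff (ne_of_gt (by linarith : (0:ℝ) < -(h - A ζ₃)))]; ring
end

section
/- Let R > 0, t ∈ (0,1), −2 < l < 2R, and h ∈ ℝ, and assume: there exists p* with max(0,l) < p* < min(l+2,2R) and P(p*) > 0; h ∉ {A(0), A(l), A(2R), A(l+2)}; and h > A(max(0,l)) as well as h > A(min(l+2,2R)). Let ζ₂ < ζ₃ be the two roots of P in (max(0,l), min(l+2,2R)). Then (h−A(p))/√(B(p)) ∈ [−1,1] for all p ∈ [ζ₂,ζ₃], the function R_I(p)/√(P(p)) is (improperly) integrable on (ζ₂,ζ₃), and ∫_{ζ₂}^{ζ₃} arccos((h−A(p))/√(B(p))) dp = − ∫_{ζ₂}^{ζ₃} R_I(p)/√(P(p)) dp, where R_I(p) := 1 − 3t + R + t/R − l(1−t) + 2h + (1−t)p + (1/2)·( (h−A(l))·l/(p−l) + (h−A(2R))·2R/(p−2R) + (h−A(l+2))·(l+2)/(p−l−2) ). -/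
open MeasureTheory

set_option maxHeartbeats 2000000

/-- Let `R > 0`, `t ∈ (0,1)`, `−2 < l < 2R`, `h ∈ ℝ`; assume there is `p₀` with
`max(0,l) < p₀ < min(l+2,2R)` and `P(p₀) > 0`; `h ∉ {A(0),A(l),A(2R),A(l+2)}`; and
`h > A(max(0,l))`, `h > A(min(l+2,2R))`. Let `ζ₂ < ζ₃` be the two roots of `P` in
`(max(0,l), min(l+2,2R))`. Then `(h−A(p))/√(B(p)) ∈ [−1,1]` on `[ζ₂,ζ₃]`, the
function `R_I(p)/√(P(p))` is (improperly) integrable on `(ζ₂,ζ₃)`, and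
`∫_{ζ₂}^{ζ₃} arccos((h−A(p))/√(B(p))) dp = − ∫_{ζ₂}^{ζ₃} R_I(p)/√(P(p)) dp`. -/
theorem stmt_8 (R t l h : ℝ) (hR : 0 < R) (ht : 0 < t ∧ t < 1)
    (hl : -2 < l) (hl' : l < 2*R)
    (A B P RI : ℝ → ℝ)
    (hA : ∀ p, A p = (1/R)*(R*l*(1-2*t) + (t - R*(1-2*t) + l*t)*p - t*p^2))
    (hB : ∀ p, B p = (t^2/R^2) * (p*(p-l)*(p-2*R)*(p-l-2)))
    (hP : ∀ p, P p = B p - (h - A p)^2)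
    (hRI : ∀ p, RI p = 1 - 3*t + R + t/R - l*(1-t) + 2*h + (1-t)*p
      + (1/2) * ((h - A l)*l/(p - l) + (h - A (2*R))*(2*R)/(p - 2*R)
          + (h - A (l+2))*(l+2)/(p - l - 2)))
    (p₀ : ℝ) (hp₀ : max 0 l < p₀ ∧ p₀ < min (l+2) (2*R) ∧ 0 < P p₀)
    (hh : h ≠ A 0 ∧ h ≠ A l ∧ h ≠ A (2*R) ∧ h ≠ A (l+2))
    (hh₁ : A (max 0 l) < h) (hh₂ : A (min (l+2) (2*R)) < h)
    (ζ₂ ζ₃ : ℝ) (hζ₂ : max 0 l < ζ₂) (hζ₂₃ : ζ₂ < ζ₃) (hζ₃ : ζ₃ < min (l+2) (2*R))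
    (hroot₂ : P ζ₂ = 0) (hroot₃ : P ζ₃ = 0) :
    (∀ p ∈ Set.Icc ζ₂ ζ₃, (h - A p) / Real.sqrt (B p) ∈ Set.Icc (-1:ℝ) 1) ∧
    IntervalIntegrable (fun p => RI p / Real.sqrt (P p)) volume ζ₂ ζ₃ ∧
    ∫ p in ζ₂..ζ₃, Real.arccos ((h - A p) / Real.sqrt (B p))
      = - ∫ p in ζ₂..ζ₃, RI p / Real.sqrt (P p) := by
  obtain ⟨ht0, ht1⟩ := ht
  obtain ⟨hh0, hhl, hh2R, hhl2⟩ := hh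
  have hRne : R ≠ 0 := ne_of_gt hR
  have ha0 : (0:ℝ) ≤ max 0 l := le_max_left 0 l
  have hal : l ≤ max 0 l := le_max_right 0 l
  have hb1 : min (l+2) (2*R) ≤ l+2 := min_le_left _ _
  have hb2 : min (l+2) (2*R) ≤ 2*R := min_le_right _ _
  have hbig : max 0 l < min (l+2) (2*R) := lt_trans hζ₂ (lt_trans hζ₂₃ hζ₃)
  -- positivity of B on the relevant region
  have hBpos : ∀ p : ℝ, 0 < p → l < p → p < 2*R → p < l+2 → 0 < B p := by
    intro p h1 h2 h3 h4
    rw [hB]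
    have h5 : 0 < (p*(p-l))*((2*R-p)*((l+2)-p)) :=
      mul_pos (mul_pos h1 (by linarith)) (mul_pos (by linarith) (by linarith))
    have ht2 : (0:ℝ) < t^2/R^2 := by positivity
    calc (0:ℝ) < (t^2/R^2)*((p*(p-l))*((2*R-p)*((l+2)-p))) := mul_pos ht2 h5
      _ = (t^2/R^2)*(p*(p-l)*(p-2*R)*(p-l-2)) := by ring
  -- explicit polynomial form of R^2 * P
  have hPe : ∀ q : ℝ, R^2 * P q = t^2*(q*(q-l)*(q-2*R)*(q-l-2))
      - (R*h - (R*l*(1-2*t) + (t - R*(1-2*t) + l*t)*q - t*q^2))^2 := by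
    intro q
    rw [hP q, hB q, hA q]
    field_simp
  -- factorization of the (cubic) polynomial R^2 * P
  obtain ⟨C₃, C₂, hfac⟩ : ∃ c3 c2 : ℝ, ∀ p : ℝ,
      R^2 * P p = (p-ζ₂)*(p-ζ₃)*(c3*(p+ζ₂+ζ₃)+c2) := by
    refine ⟨t*(2*(t - R*(1-2*t) + l*t) - t*(2*l+2*R+2)),
      t^2*(l^2+2*l+4*R*l+4*R) - (t-R*(1-2*t)+l*t)^2 - 2*t*R*(h - l*(1-2*t)),
      fun p => ?_⟩
    have e2 : t^2*(ζ₂*(ζ₂-l)*(ζ₂-2*R)*(ζ₂-l-2))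
        - (R*h - (R*l*(1-2*t) + (t - R*(1-2*t) + l*t)*ζ₂ - t*ζ₂^2))^2 = 0 := by
      rw [← hPe ζ₂, hroot₂, mul_zero]
    have e3 : t^2*(ζ₃*(ζ₃-l)*(ζ₃-2*R)*(ζ₃-l-2))
        - (R*h - (R*l*(1-2*t) + (t - R*(1-2*t) + l*t)*ζ₃ - t*ζ₃^2))^2 = 0 := by
      rw [← hPe ζ₃, hroot₃, mul_zero]
    rw [hPe p]
    apply mul_left_cancel₀ (sub_ne_zero.2 hζ₂₃.ne')
    linear_combination (ζ₃-p)*e2 + (p-ζ₂)*e3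
  -- P is negative at both endpoints of the big interval
  have hPa : R^2 * P (max 0 l) < 0 := by
    have hone : ∀ x : ℝ, B x = 0 → h ≠ A x → R^2 * P x < 0 := by
      intro x hBx hne
      rw [hP x, hBx]
      have h2 : (0:ℝ) < (h - A x)^2 :=
        lt_of_le_of_ne (sq_nonneg _) (Ne.symm (pow_ne_zero 2 (sub_ne_zero.2 hne)))
      have h3 : (0:ℝ) - (h - A x)^2 < 0 := by linarith
      exact mul_neg_of_pos_of_neg (pow_pos hR 2) h3
    rcases le_total l 0 with hc | hc
    · rw [max_eq_left hc]
      exact hone 0 (by rw [hB]; ring) hh0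
    · rw [max_eq_right hc]
      exact hone l (by rw [hB]; ring) hhl
  have hPb : R^2 * P (min (l+2) (2*R)) < 0 := by
    have hone : ∀ x : ℝ, B x = 0 → h ≠ A x → R^2 * P x < 0 := by
      intro x hBx hne
      rw [hP x, hBx]
      have h2 : (0:ℝ) < (h - A x)^2 :=
        lt_of_le_of_ne (sq_nonneg _) (Ne.symm (pow_ne_zero 2 (sub_ne_zero.2 hne)))
      have h3 : (0:ℝ) - (h - A x)^2 < 0 := by linarith
      exact mul_neg_of_pos_of_neg (pow_pos hR 2) h3
    rcases le_total (l+2) (2*R) with hc | hc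
    · rw [min_eq_left hc]
      exact hone (l+2) (by rw [hB]; ring) hhl2
    · rw [min_eq_right hc]
      exact hone (2*R) (by rw [hB]; ring) hh2R
  -- the linear factor is negative at the endpoints
  have hTa : C₃*(max 0 l+ζ₂+ζ₃)+C₂ < 0 := by
    have hprod : 0 < (max 0 l - ζ₂)*(max 0 l - ζ₃) :=
      mul_pos_of_neg_of_neg (by linarith) (by linarith)
    have hf := hfac (max 0 l)
    by_contra hcon
    push_neg at hcon
    have h4 := mul_nonneg hprod.le hcon
    linarith [hf, hPa, h4]
  have hTb : C₃*(min (l+2) (2*R)+ζ₂+ζ₃)+C₂ < 0 := by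
    have hprod : 0 < (min (l+2) (2*R) - ζ₂)*(min (l+2) (2*R) - ζ₃) :=
      mul_pos (by linarith) (by linarith)
    have hf := hfac (min (l+2) (2*R))
    by_contra hcon
    push_neg at hcon
    have h4 := mul_nonneg hprod.le hcon
    linarith [hf, hPb, h4]
  -- the linear factor is negative on the whole big interval
  have hTneg : ∀ p : ℝ, max 0 l ≤ p → p ≤ min (l+2) (2*R) → C₃*(p+ζ₂+ζ₃)+C₂ < 0 := by
    intro p h1 h2
    rcases le_total 0 C₃ with hc | hc
    · have e : C₃*(min (l+2) (2*R)+ζ₂+ζ₃)+C₂ - (C₃*(p+ζ₂+ζ₃)+C₂)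
          = C₃ * (min (l+2) (2*R) - p) := by ring
      have h3 := mul_nonneg hc (by linarith : (0:ℝ) ≤ min (l+2) (2*R) - p)
      linarith
    · have e : C₃*(max 0 l+ζ₂+ζ₃)+C₂ - (C₃*(p+ζ₂+ζ₃)+C₂)
          = (-C₃) * (p - max 0 l) := by ring
      have h3 := mul_nonneg (neg_nonneg.2 hc) (by linarith : (0:ℝ) ≤ p - max 0 l)
      linarith
  -- positivity of P strictly between the roots
  have hPpos : ∀ p : ℝ, ζ₂ < p → p < ζ₃ → 0 < P p := by
    intro p h1 h2
    have hT := hTneg p (by linarith) (by linarith)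
    have hf := hfac p
    have hprod : 0 < (p-ζ₂)*(ζ₃-p) := mul_pos (by linarith) (by linarith)
    by_contra hcon
    push_neg at hcon
    have h4 := mul_pos hprod (neg_pos.2 hT)
    have h5 := mul_nonneg (pow_pos hR 2).le (neg_nonneg.2 hcon)
    linarith [hf, h4, h5]
  have hPnonneg : ∀ p : ℝ, ζ₂ ≤ p → p ≤ ζ₃ → 0 ≤ P p := by
    intro p h1 h2
    rcases eq_or_lt_of_le h1 with rfl | h1'
    · exact le_of_eq hroot₂.symm
    rcases eq_or_lt_of_le h2 with rfl | h2'
    · exact le_of_eq hroot₃.symm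
    exact (hPpos p h1' h2').le
  have hBposIcc : ∀ p : ℝ, ζ₂ ≤ p → p ≤ ζ₃ → 0 < B p := by
    intro p h1 h2
    exact hBpos p (by linarith) (by linarith) (by linarith) (by linarith)
  -- Part 1
  have part1 : ∀ p ∈ Set.Icc ζ₂ ζ₃, (h - A p) / Real.sqrt (B p) ∈ Set.Icc (-1:ℝ) 1 := by
    rintro p ⟨h1, h2⟩
    have hBp := hBposIcc p h1 h2
    have hPp := hPnonneg p h1 h2
    have hsq : 0 < Real.sqrt (B p) := Real.sqrt_pos.2 hBp
    have habs : |h - A p| ≤ Real.sqrt (B p) := by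
      rw [← Real.sqrt_sq_eq_abs]
      apply Real.sqrt_le_sqrt
      have := hP p
      linarith
    have h3 := abs_le.1 habs
    constructor
    · rw [le_div_iff₀ hsq]; linarith [h3.1]
    · rw [div_le_iff₀ hsq]; linarith [h3.2]
  -- continuity of the basic functions
  have hAc : Continuous A := by
    rw [funext hA]; fun_prop
  have hBc : Continuous B := by
    rw [funext hB]; fun_prop
  have hPc : Continuous P := by
    rw [funext hP, funext hB, funext hA]; fun_prop
  -- h - A is positive at ζ₂ and ζ₃
  have hA2 : 0 < h - A ζ₂ := by
    by_contra hcon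
    push_neg at hcon
    have hB2 : 0 < B ζ₂ := hBposIcc ζ₂ le_rfl hζ₂₃.le
    have hne : h ≠ A ζ₂ := by
      intro he
      have h0 : B ζ₂ - (h - A ζ₂)^2 = 0 := by rw [← hP ζ₂]; exact hroot₂
      rw [he] at h0
      simp at h0
      linarith
    have hlt : h < A ζ₂ := lt_of_le_of_ne (by linarith) (fun he => hne he)
    obtain ⟨x, hx, hxA⟩ := intermediate_value_Icc hζ₂.le hAc.continuousOn ⟨hh₁.le, hlt.le⟩
    have hxa : max 0 l < x := by
      rcases eq_or_lt_of_le hx.1 with he | hgt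
      · exfalso; rw [← he] at hxA; linarith [hh₁, hxA.symm ▸ hh₁]
      · exact hgt
    have hBx : 0 < B x :=
      hBpos x (by linarith [hx.2]) (by linarith [hx.2]) (by linarith [hx.2]) (by linarith [hx.2])
    have hPxB : P x = B x := by rw [hP x, hxA]; ring
    have hPxpos : 0 < P x := by rw [hPxB]; exact hBx
    have hTx := hTneg x hxa.le (by linarith [hx.2])
    have hf := hfac x
    have h8 := mul_nonneg (mul_nonneg (sub_nonneg.2 hx.2) (by linarith [hx.2] : (0:ℝ) ≤ ζ₃ - x))
        (neg_nonneg.2 hTx.le)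
    have h9 := mul_pos (pow_pos hR 2) hPxpos
    linarith [hf, h8, h9]
  have hA3 : 0 < h - A ζ₃ := by
    by_contra hcon
    push_neg at hcon
    have hB3 : 0 < B ζ₃ := hBposIcc ζ₃ hζ₂₃.le le_rfl
    have hne : h ≠ A ζ₃ := by
      intro he
      have h0 : B ζ₃ - (h - A ζ₃)^2 = 0 := by rw [← hP ζ₃]; exact hroot₃
      rw [he] at h0
      simp at h0
      linarith
    have hlt : h < A ζ₃ := lt_of_le_of_ne (by linarith) (fun he => hne he)
    obtain ⟨x, hx, hxA⟩ := intermediate_value_Icc' hζ₃.le hAc.continuousOn ⟨hh₂.le, hlt.le⟩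
    have hxb : x < min (l+2) (2*R) := by
      rcases eq_or_lt_of_le hx.2 with he | hltx
      · exfalso; rw [he] at hxA; linarith [hxA.symm ▸ hh₂]
      · exact hltx
    have hBx : 0 < B x :=
      hBpos x (by linarith [hx.1]) (by linarith [hx.1]) (by linarith) (by linarith)
    have hPxB : P x = B x := by rw [hP x, hxA]; ring
    have hPxpos : 0 < P x := by rw [hPxB]; exact hBx
    have hTx := hTneg x (by linarith [hx.1]) hxb.le
    have hf := hfac x
    have h8 := mul_nonneg (mul_nonneg (by linarith [hx.1] : (0:ℝ) ≤ x - ζ₂) (sub_nonneg.2 hx.1))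
        (neg_nonneg.2 hTx.le)
    have h9 := mul_pos (pow_pos hR 2) hPxpos
    linarith [hf, h8, h9]
  -- value of the integrand at the roots
  have hf2 : (h - A ζ₂)/Real.sqrt (B ζ₂) = 1 := by
    have hB2 : B ζ₂ = (h - A ζ₂)^2 := by have := hP ζ₂; rw [hroot₂] at this; linarith
    rw [hB2, Real.sqrt_sq hA2.le, div_self hA2.ne']
  have hf3 : (h - A ζ₃)/Real.sqrt (B ζ₃) = 1 := by
    have hB3 : B ζ₃ = (h - A ζ₃)^2 := by have := hP ζ₃; rw [hroot₃] at this; linarith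
    rw [hB3, Real.sqrt_sq hA3.le, div_self hA3.ne']
  -- integrability of 1/sqrt((p-ζ₂)(ζ₃-p)) via arcsin antiderivative
  have harcsin_int : IntegrableOn (fun p => 1/Real.sqrt ((p-ζ₂)*(ζ₃-p))) (Set.Ioc ζ₂ ζ₃) volume := by
    apply intervalIntegral.integrableOn_deriv_of_nonneg
      (g := fun p => Real.arcsin ((2*p - ζ₂ - ζ₃)/(ζ₃ - ζ₂)))
    · exact (Real.continuous_arcsin.comp (by fun_prop)).continuousOn
    · intro x hx
      obtain ⟨hx1, hx2⟩ := hx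
      have hd : (0:ℝ) < ζ₃ - ζ₂ := by linarith
      have hu1 : (2*x - ζ₂ - ζ₃)/(ζ₃ - ζ₂) ≠ -1 := by
        intro he; rw [div_eq_iff hd.ne'] at he; linarith
      have hu2 : (2*x - ζ₂ - ζ₃)/(ζ₃ - ζ₂) ≠ 1 := by
        intro he; rw [div_eq_iff hd.ne'] at he; linarith
      have hinner : HasDerivAt (fun p:ℝ => (2*p - ζ₂ - ζ₃)/(ζ₃ - ζ₂)) (2/(ζ₃ - ζ₂)) x := by
        have h1 : HasDerivAt (fun p:ℝ => 2*p - ζ₂ - ζ₃) 2 x := by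
          simpa using (((hasDerivAt_id x).const_mul 2).sub_const ζ₂).sub_const ζ₃
        exact h1.div_const _
      have hcomp := (Real.hasDerivAt_arcsin hu1 hu2).comp x hinner
      have hprod : 0 < (x-ζ₂)*(ζ₃-x) := mul_pos (by linarith) (by linarith)
      have hsu : 0 < Real.sqrt ((x-ζ₂)*(ζ₃-x)) := Real.sqrt_pos.2 hprod
      have e1 : 1 - ((2*x - ζ₂ - ζ₃)/(ζ₃ - ζ₂))^2 = (2/(ζ₃-ζ₂))^2 * ((x-ζ₂)*(ζ₃-x)) := by
        field_simp
        ring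
      have e2 : Real.sqrt (1 - ((2*x - ζ₂ - ζ₃)/(ζ₃ - ζ₂))^2)
          = (2/(ζ₃-ζ₂)) * Real.sqrt ((x-ζ₂)*(ζ₃-x)) := by
        rw [e1, Real.sqrt_mul (sq_nonneg _), Real.sqrt_sq (by positivity : (0:ℝ) ≤ 2/(ζ₃-ζ₂))]
      have e3 : (1:ℝ)/Real.sqrt ((x-ζ₂)*(ζ₃-x))
          = 1/Real.sqrt (1 - ((2*x - ζ₂ - ζ₃)/(ζ₃ - ζ₂))^2) * (2/(ζ₃ - ζ₂)) := by
        rw [e2]; field_simp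
      show HasDerivAt (fun p:ℝ => Real.arcsin ((2*p - ζ₂ - ζ₃)/(ζ₃ - ζ₂)))
        (1/Real.sqrt ((x-ζ₂)*(ζ₃-x))) x
      rw [e3]; exact hcomp
    · intro x hx; positivity
  -- continuity of RI on [ζ₂, ζ₃]
  have hRIcont : ContinuousOn RI (Set.Icc ζ₂ ζ₃) := by
    rw [funext hRI]
    apply ContinuousOn.add
    · fun_prop
    · apply ContinuousOn.mul continuousOn_const
      apply ContinuousOn.add
      apply ContinuousOn.add
      · exact ContinuousOn.div continuousOn_const (by fun_prop)
          (fun x hx => sub_ne_zero.2 (ne_of_gt (by have := hx.1; have := hx.2; linarith)))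
      · exact ContinuousOn.div continuousOn_const (by fun_prop)
          (fun x hx => sub_ne_zero.2 (ne_of_lt (by have := hx.1; have := hx.2; linarith)))
      · exact ContinuousOn.div continuousOn_const (by fun_prop)
          (fun x hx => by
            have h1 := hx.1; have h2 := hx.2
            intro he; have : x < l + 2 := by linarith
            linarith [he])
  -- lower bound for P between the roots
  have hm1 : 0 < min (-(C₃*(ζ₂+ζ₂+ζ₃)+C₂)) (-(C₃*(ζ₃+ζ₂+ζ₃)+C₂)) :=
    lt_min (by have := hTneg ζ₂ (by linarith) (by linarith); linarith)
      (by have := hTneg ζ₃ (by linarith) (by linarith); linarith)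
  have hPlow : ∀ x : ℝ, ζ₂ ≤ x → x ≤ ζ₃ →
      (x-ζ₂)*(ζ₃-x)*((min (-(C₃*(ζ₂+ζ₂+ζ₃)+C₂)) (-(C₃*(ζ₃+ζ₂+ζ₃)+C₂)))/R^2) ≤ P x := by
    intro x h1 h2
    have hf := hfac x
    have hTm : min (-(C₃*(ζ₂+ζ₂+ζ₃)+C₂)) (-(C₃*(ζ₃+ζ₂+ζ₃)+C₂)) ≤ -(C₃*(x+ζ₂+ζ₃)+C₂) := by
      rcases le_total 0 C₃ with hc | hc
      · have h3 := mul_nonneg hc (by linarith : (0:ℝ) ≤ ζ₃ - x)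
        have hm2 := min_le_right (-(C₃*(ζ₂+ζ₂+ζ₃)+C₂)) (-(C₃*(ζ₃+ζ₂+ζ₃)+C₂))
        nlinarith [hm2, h3]
      · have h3 := mul_nonneg (neg_nonneg.2 hc) (by linarith : (0:ℝ) ≤ x - ζ₂)
        have hm2 := min_le_left (-(C₃*(ζ₂+ζ₂+ζ₃)+C₂)) (-(C₃*(ζ₃+ζ₂+ζ₃)+C₂))
        nlinarith [hm2, h3]
    have hprod : 0 ≤ (x-ζ₂)*(ζ₃-x) := mul_nonneg (by linarith) (by linarith)
    have h4 : (x-ζ₂)*(ζ₃-x)*(min (-(C₃*(ζ₂+ζ₂+ζ₃)+C₂)) (-(C₃*(ζ₃+ζ₂+ζ₃)+C₂))) ≤ R^2 * P x := by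
      have h5 := mul_le_mul_of_nonneg_left hTm hprod
      nlinarith [hf, h5]
    have hR2 : (0:ℝ) < R^2 := pow_pos hR 2
    have e : (x-ζ₂)*(ζ₃-x)*((min (-(C₃*(ζ₂+ζ₂+ζ₃)+C₂)) (-(C₃*(ζ₃+ζ₂+ζ₃)+C₂)))/R^2)
        = ((x-ζ₂)*(ζ₃-x)*(min (-(C₃*(ζ₂+ζ₂+ζ₃)+C₂)) (-(C₃*(ζ₃+ζ₂+ζ₃)+C₂))))/R^2 := by ring
    rw [e, div_le_iff₀ hR2]
    nlinarith [h4]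
  -- measurability
  have hmeas : AEStronglyMeasurable (fun p => RI p/Real.sqrt (P p))
      (volume.restrict (Set.Ioo ζ₂ ζ₃)) := by
    apply ContinuousOn.aestronglyMeasurable _ measurableSet_Ioo
    exact ContinuousOn.div (hRIcont.mono Set.Ioo_subset_Icc_self)
      (Real.continuous_sqrt.comp hPc).continuousOn
      (fun x hx => (Real.sqrt_pos.2 (hPpos x hx.1 hx.2)).ne')
  obtain ⟨M, hM⟩ :=
    (isCompact_Icc : IsCompact (Set.Icc ζ₂ ζ₃)).exists_bound_of_continuousOn hRIcont
  have hmc : 0 < (min (-(C₃*(ζ₂+ζ₂+ζ₃)+C₂)) (-(C₃*(ζ₃+ζ₂+ζ₃)+C₂)))/R^2 :=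
    div_pos hm1 (pow_pos hR 2)
  have hsm : 0 < Real.sqrt ((min (-(C₃*(ζ₂+ζ₂+ζ₃)+C₂)) (-(C₃*(ζ₃+ζ₂+ζ₃)+C₂)))/R^2) :=
    Real.sqrt_pos.2 hmc
  have hIntRIP : IntegrableOn (fun p => RI p/Real.sqrt (P p)) (Set.Ioo ζ₂ ζ₃) volume := by
    have hg : IntegrableOn (fun p =>
        ((|M|+1)/Real.sqrt ((min (-(C₃*(ζ₂+ζ₂+ζ₃)+C₂)) (-(C₃*(ζ₃+ζ₂+ζ₃)+C₂)))/R^2))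
          * (1/Real.sqrt ((p-ζ₂)*(ζ₃-p)))) (Set.Ioo ζ₂ ζ₃) volume :=
      (harcsin_int.mono_set Set.Ioo_subset_Ioc_self).const_mul _
    apply Integrable.mono' hg hmeas
    rw [ae_restrict_iff' measurableSet_Ioo]
    refine ae_of_all _ fun x hx => ?_
    obtain ⟨hx1, hx2⟩ := hx
    have hPx := hPpos x hx1 hx2
    have hsP : 0 < Real.sqrt (P x) := Real.sqrt_pos.2 hPx
    have hu : 0 < (x-ζ₂)*(ζ₃-x) := mul_pos (by linarith) (by linarith)
    have hsu : 0 < Real.sqrt ((x-ζ₂)*(ζ₃-x)) := Real.sqrt_pos.2 hu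
    have hsqP : Real.sqrt ((x-ζ₂)*(ζ₃-x))
        * Real.sqrt ((min (-(C₃*(ζ₂+ζ₂+ζ₃)+C₂)) (-(C₃*(ζ₃+ζ₂+ζ₃)+C₂)))/R^2)
        ≤ Real.sqrt (P x) := by
      rw [← Real.sqrt_mul hu.le]
      exact Real.sqrt_le_sqrt (hPlow x hx1.le hx2.le)
    have hMx : |RI x| ≤ |M| + 1 := by
      have h6 := hM x ⟨hx1.le, hx2.le⟩
      rw [Real.norm_eq_abs] at h6
      have h7 : M ≤ |M| := le_abs_self M
      linarith
    have e4 : ‖RI x/Real.sqrt (P x)‖ = |RI x|/Real.sqrt (P x) := by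
      rw [norm_div, Real.norm_eq_abs, Real.norm_eq_abs, abs_of_pos hsP]
    rw [e4]
    calc |RI x|/Real.sqrt (P x)
        ≤ (|M|+1)/(Real.sqrt ((x-ζ₂)*(ζ₃-x))
            * Real.sqrt ((min (-(C₃*(ζ₂+ζ₂+ζ₃)+C₂)) (-(C₃*(ζ₃+ζ₂+ζ₃)+C₂)))/R^2)) := by
          apply div_le_div₀ (by positivity) hMx (by positivity) hsqP
      _ = ((|M|+1)/Real.sqrt ((min (-(C₃*(ζ₂+ζ₂+ζ₃)+C₂)) (-(C₃*(ζ₃+ζ₂+ζ₃)+C₂)))/R^2))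
            * (1/Real.sqrt ((x-ζ₂)*(ζ₃-x))) := by
          field_simp
  have hInt2 : IntervalIntegrable (fun p => RI p/Real.sqrt (P p)) volume ζ₂ ζ₃ :=
    (intervalIntegrable_iff_integrableOn_Ioo_of_le hζ₂₃.le).2 hIntRIP
  -- continuity of the integrand and of the primitive
  have hfqcont : ContinuousOn (fun p => (h - A p)/Real.sqrt (B p)) (Set.Icc ζ₂ ζ₃) :=
    ContinuousOn.div (continuous_const.sub hAc).continuousOn
      (Real.continuous_sqrt.comp hBc).continuousOn
      (fun x hx => (Real.sqrt_pos.2 (hBposIcc x hx.1 hx.2)).ne')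
  have hGcont : ContinuousOn (fun p => p * Real.arccos ((h - A p)/Real.sqrt (B p)))
      (Set.Icc ζ₂ ζ₃) :=
    (continuous_id.continuousOn).mul (Real.continuous_arccos.comp_continuousOn hfqcont)
  -- derivative of the primitive
  have hGderiv : ∀ x ∈ Set.Ioo ζ₂ ζ₃,
      HasDerivAt (fun p => p * Real.arccos ((h - A p)/Real.sqrt (B p)))
        (Real.arccos ((h - A x)/Real.sqrt (B x)) + RI x/Real.sqrt (P x)) x := by
    intro x hx
    obtain ⟨hx1, hx2⟩ := hx
    have hx0 : 0 < x := by linarith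
    have hxl : l < x := by linarith
    have hx2R : x < 2*R := by linarith
    have hxl2 : x < l+2 := by linarith
    have hBx : 0 < B x := hBpos x hx0 hxl hx2R hxl2
    have hPx : 0 < P x := hPpos x hx1 hx2
    have hsB : 0 < Real.sqrt (B x) := Real.sqrt_pos.2 hBx
    have hsP : 0 < Real.sqrt (P x) := Real.sqrt_pos.2 hPx
    have hsq : Real.sqrt (B x)^2 = B x := Real.sq_sqrt hBx.le
    have hPB : (h - A x)^2 < B x := by have := hP x; linarith
    have hu2 : ((h - A x)/Real.sqrt (B x))^2 < 1 := by
      rw [div_pow, hsq, div_lt_one hBx]; exact hPB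
    have hune1 : (h - A x)/Real.sqrt (B x) ≠ -1 := by
      intro he; rw [he] at hu2; norm_num at hu2
    have hune2 : (h - A x)/Real.sqrt (B x) ≠ 1 := by
      intro he; rw [he] at hu2; norm_num at hu2
    obtain ⟨dA, hdA⟩ : ∃ d:ℝ, d = (1/R)*((t - R*(1-2*t) + l*t) - t*(2*x)) := ⟨_, rfl⟩
    obtain ⟨dB, hdB⟩ : ∃ d:ℝ, d = (t^2/R^2)*(((1*(x-l)+x*1)*(x-2*R) + x*(x-l)*1)*(x-l-2)
        + x*(x-l)*(x-2*R)*1) := ⟨_, rfl⟩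
    have hA' : HasDerivAt A dA x := by
      rw [hdA, funext hA]
      have hp2 : HasDerivAt (fun p:ℝ => p^2) (2*x) x := by simpa using hasDerivAt_pow 2 x
      have hlin : HasDerivAt (fun p:ℝ => (t - R*(1-2*t) + l*t)*p) (t - R*(1-2*t) + l*t) x := by
        simpa using (hasDerivAt_id x).const_mul (t - R*(1-2*t) + l*t)
      have h1 : HasDerivAt (fun p:ℝ => R*l*(1-2*t) + (t - R*(1-2*t) + l*t)*p - t*p^2)
          ((t - R*(1-2*t) + l*t) - t*(2*x)) x := by
        exact (hlin.const_add (R*l*(1-2*t))).sub (hp2.const_mul t)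
      simpa using h1.const_mul (1/R)
    have hBd : HasDerivAt B dB x := by
      rw [hdB, funext hB]
      exact ((((hasDerivAt_id x).mul ((hasDerivAt_id x).sub_const l)).mul
        ((hasDerivAt_id x).sub_const (2*R))).mul
        (((hasDerivAt_id x).sub_const l).sub_const 2)).const_mul (t^2/R^2)
    have hnum : HasDerivAt (fun p => h - A p) (-dA) x := hA'.const_sub h
    have hden : HasDerivAt (fun p => Real.sqrt (B p)) (dB/(2*Real.sqrt (B x))) x := by
      have h2 := (Real.hasDerivAt_sqrt hBx.ne').comp x hBd
      have h3 : dB/(2*Real.sqrt (B x)) = 1/(2*Real.sqrt (B x)) * dB := by ring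
      rw [h3]; exact h2
    have hfq : HasDerivAt (fun p => (h - A p)/Real.sqrt (B p))
        ((-dA * Real.sqrt (B x) - (h - A x)*(dB/(2*Real.sqrt (B x))))/(Real.sqrt (B x))^2) x :=
      hnum.div hden hsB.ne'
    have harc := (Real.hasDerivAt_arccos hune1 hune2).comp x hfq
    have hG : HasDerivAt (fun p => p * Real.arccos ((h - A p)/Real.sqrt (B p)))
        (1 * Real.arccos ((h - A x)/Real.sqrt (B x))
          + x * (-(1/Real.sqrt (1 - ((h - A x)/Real.sqrt (B x))^2))
            * ((-dA * Real.sqrt (B x) - (h - A x)*(dB/(2*Real.sqrt (B x))))/(Real.sqrt (B x))^2))) x :=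
      (hasDerivAt_id x).mul harc
    have e1 : 1 - ((h - A x)/Real.sqrt (B x))^2 = P x / B x := by
      rw [div_pow, hsq, hP x]
      field_simp
    have hsqrt1u : Real.sqrt (1 - ((h - A x)/Real.sqrt (B x))^2)
        = Real.sqrt (P x)/Real.sqrt (B x) := by
      rw [e1, Real.sqrt_div hPx.le]
    have hRIid : RI x * B x = x*(dA*B x + (h - A x)*(dB/2)) := by
      rw [hRI x, hB x, hA x, hA l, hA (2*R), hA (l+2), hdA, hdB]
      have hne1 : x - l ≠ 0 := sub_ne_zero.2 hxl.ne'
      have hne2 : x - 2*R ≠ 0 := sub_ne_zero.2 hx2R.ne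
      have hne2' : x - R*2 ≠ 0 := by intro he; linarith
      have hne3 : x - l - 2 ≠ 0 := by intro he; linarith
      field_simp
      ring
    have hkey : x * (-(1/(Real.sqrt (P x)/Real.sqrt (B x)))
        * ((-dA * Real.sqrt (B x) - (h - A x)*(dB/(2*Real.sqrt (B x))))/(Real.sqrt (B x))^2))
        = RI x/Real.sqrt (P x) := by
      have hs2 : Real.sqrt (B x) * Real.sqrt (B x) = B x := Real.mul_self_sqrt hBx.le
      have e0 : (-dA * Real.sqrt (B x) - (h - A x)*(dB/(2*Real.sqrt (B x))))/(Real.sqrt (B x))^2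
          = (-(dA*(Real.sqrt (B x)*Real.sqrt (B x))) - (h - A x)*(dB/2))
            /(Real.sqrt (B x)*(Real.sqrt (B x)*Real.sqrt (B x))) := by
        field_simp
      rw [hs2] at e0
      rw [e0, one_div_div]
      have e5 : x * (-(Real.sqrt (B x)/Real.sqrt (P x))
          * ((-(dA*B x) - (h - A x)*(dB/2))/(Real.sqrt (B x)*B x)))
          = (x*(dA*B x + (h - A x)*(dB/2)))/(Real.sqrt (P x)*B x) := by
        field_simp
        ring
      rw [e5, div_eq_div_iff (mul_ne_zero hsP.ne' hBx.ne') hsP.ne']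
      linear_combination (-Real.sqrt (P x)) * hRIid
    have hfinal : (1:ℝ) * Real.arccos ((h - A x)/Real.sqrt (B x))
        + x * (-(1/Real.sqrt (1 - ((h - A x)/Real.sqrt (B x))^2))
          * ((-dA * Real.sqrt (B x) - (h - A x)*(dB/(2*Real.sqrt (B x))))/(Real.sqrt (B x))^2))
        = Real.arccos ((h - A x)/Real.sqrt (B x)) + RI x/Real.sqrt (P x) := by
      rw [hsqrt1u, hkey]; ring
    rw [hfinal] at hG
    exact hG
  -- assemble
  have hInt1 : IntervalIntegrable (fun p => Real.arccos ((h - A p)/Real.sqrt (B p)))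
      volume ζ₂ ζ₃ := by
    apply ContinuousOn.intervalIntegrable
    rw [Set.uIcc_of_le hζ₂₃.le]
    exact Real.continuous_arccos.comp_continuousOn hfqcont
  have hIntSum : IntervalIntegrable
      (fun p => Real.arccos ((h - A p)/Real.sqrt (B p)) + RI p/Real.sqrt (P p))
      volume ζ₂ ζ₃ := hInt1.add hInt2
  have hFTC := intervalIntegral.integral_eq_sub_of_hasDerivAt_of_le
    (f' := fun p => Real.arccos ((h - A p)/Real.sqrt (B p)) + RI p/Real.sqrt (P p))
    hζ₂₃.le hGcont hGderiv hIntSum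
  rw [hf2, hf3, Real.arccos_one, mul_zero, mul_zero, sub_zero] at hFTC
  rw [intervalIntegral.integral_add hInt1 hInt2] at hFTC
  exact ⟨part1, hInt2, by linarith [hFTC]⟩
end

section
/- Let R > 0 and t ∈ (0,1), and take l = h = 0. Then: (i) P(p) = (p²/R²)·Q(p) where Q(p) := rA² + 2R(t−1)t·p, and moreover Q(p) = t²(2−p)(2R−p) − (R(1−2t) − t + tp)² as polynomials in p; (ii) if in addition t⁻(R) < t < t⁺(R), then the roots of P are 0 (double) and ζ₃ := rA²/(2R(1−t)t) > 0, and one has the exact identities 2 − ζ₃ = (R(1−2t)+t)²/(2R(1−t)t) and 2R − ζ₃ = (R−t)²/(2R(1−t)t); in particular 0 < ζ₃ ≤ min(2, 2R), with ζ₃ = 2 iff R(1−2t)+t = 0 and ζ₃ = 2R iff R = t. -/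
/-- Let `R > 0`, `t ∈ (0,1)`, and take `l = h = 0`. Then:
(i) `P(p) = (p²/R²)Q(p)` with `Q(p) := rA² + 2R(t−1)t·p`, and
`Q(p) = t²(2−p)(2R−p) − (R(1−2t) − t + tp)²` identically;
(ii) if moreover `t⁻(R) < t < t⁺(R)`, the roots of `P` are `0` (double) and
`ζ₃ := rA²/(2R(1−t)t) > 0`, with `2 − ζ₃ = (R(1−2t)+t)²/(2R(1−t)t)`,
`2R − ζ₃ = (R−t)²/(2R(1−t)t)`, `0 < ζ₃ ≤ min(2,2R)`, `ζ₃ = 2 ↔ R(1−2t)+t = 0`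
and `ζ₃ = 2R ↔ R = t`. -/
theorem stmt_11 (R t : ℝ) (hR : 0 < R) (ht : 0 < t ∧ t < 1)
    (rA2 : ℝ) (hrA2 : rA2 = -R^2*(1 - 2*t)^2 + 2*R*t - t^2)
    (A B P Q : ℝ → ℝ)
    (hA : ∀ p, A p = (1/R)*((t - R*(1-2*t))*p - t*p^2))
    (hB : ∀ p, B p = (t^2/R^2) * (p^2*(2-p)*(2*R-p)))
    (hP : ∀ p, P p = B p - (A p)^2)
    (hQ : ∀ p, Q p = rA2 + 2*R*(t-1)*t*p) :
    (∀ p, P p = (p^2/R^2) * Q p) ∧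
    (∀ p, Q p = t^2*(2-p)*(2*R-p) - (R*(1-2*t) - t + t*p)^2) ∧
    (tminus R < t → t < tplus R →
      ∀ ζ₃ : ℝ, ζ₃ = rA2/(2*R*(1-t)*t) →
        (∀ p, P p = 0 ↔ p = 0 ∨ p = ζ₃) ∧ 0 < ζ₃ ∧
        2 - ζ₃ = (R*(1-2*t) + t)^2/(2*R*(1-t)*t) ∧
        2*R - ζ₃ = (R - t)^2/(2*R*(1-t)*t) ∧
        ζ₃ ≤ min 2 (2*R) ∧
        (ζ₃ = 2 ↔ R*(1-2*t) + t = 0) ∧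
        (ζ₃ = 2*R ↔ R = t)) := by
  obtain ⟨ht0, ht1⟩ := ht
  have hRne : R ≠ 0 := hR.ne'
  have key : ∀ p, P p = (p^2/R^2) * (rA2 + 2*R*(t-1)*t*p) := by
    intro p
    rw [hP, hB, hA, hrA2]
    field_simp
    ring
  refine ⟨fun p => by rw [key p, hQ p], fun p => by rw [hQ, hrA2]; ring, ?_⟩
  intro h1 h2 ζ₃ hζ
  have hs2 : Real.sqrt R ^ 2 = R := Real.sq_sqrt hR.le
  have hspos : 0 < Real.sqrt R := Real.sqrt_pos.mpr hR
  set s := Real.sqrt R with hsdef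
  have hd1 : 0 < 2*R + 1 + 2*s := by positivity
  have hd2 : 0 < 2*R + 1 - 2*s := by nlinarith [sq_nonneg (s-1)]
  have ha : R < t * (2*R+1+2*s) := by
    rw [tminus, div_lt_iff₀ hd1] at h1; linarith
  have hb : t * (2*R+1-2*s) < R := by
    rw [tplus, lt_div_iff₀ hd2] at h2; linarith
  have hrA2pos : 0 < rA2 := by
    rw [hrA2]
    nlinarith [mul_pos (sub_pos.mpr ha) (sub_pos.mpr hb)]
  have hDpos : 0 < 2*R*(1-t)*t := by
    have : 0 < 1 - t := by linarith
    positivity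
  have hDne : 2*R*(1-t)*t ≠ 0 := hDpos.ne'
  have h1t : (1:ℝ) - t ≠ 0 := sub_ne_zero.mpr ht1.ne'
  have e1 : 2 - ζ₃ = (R*(1-2*t) + t)^2/(2*R*(1-t)*t) := by
    rw [hζ, hrA2]; field_simp; ring
  have e2 : 2*R - ζ₃ = (R - t)^2/(2*R*(1-t)*t) := by
    rw [hζ, hrA2]; field_simp; ring
  refine ⟨?_, ?_, e1, e2, ?_, ?_, ?_⟩
  · intro p
    rw [key p]
    constructor
    · intro h
      rcases mul_eq_zero.mp h with h' | h'
      · left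
        rcases div_eq_zero_iff.mp h' with h'' | h''
        · exact pow_eq_zero_iff (by norm_num) |>.mp h''
        · exact absurd (pow_eq_zero_iff (by norm_num) |>.mp h'') hRne
      · right
        rw [hζ, eq_div_iff hDne]
        linear_combination -h'
    · rintro (rfl | rfl)
      · simp
      · have h0 : rA2 + 2*R*(t-1)*t*p = 0 := by
          rw [hζ]; field_simp; ring
        rw [h0, mul_zero]
  · rw [hζ]; exact div_pos hrA2pos hDpos
  · have n1 : 0 ≤ (R*(1-2*t) + t)^2/(2*R*(1-t)*t) := by positivity
    have n2 : 0 ≤ (R - t)^2/(2*R*(1-t)*t) := by positivity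
    exact le_min (by linarith) (by linarith)
  · constructor
    · intro h
      rw [h, sub_self] at e1
      have hsq : (R*(1-2*t) + t)^2 = 0 := by
        rcases div_eq_zero_iff.mp e1.symm with h'' | h''
        · exact h''
        · exact absurd h'' hDne
      exact pow_eq_zero_iff (by norm_num) |>.mp hsq
    · intro h
      rw [h] at e1
      simp at e1
      linarith
  · constructor
    · intro h
      rw [h, sub_self] at e2
      have hsq : (R - t)^2 = 0 := by
        rcases div_eq_zero_iff.mp e2.symm with h'' | h''
        · exact h''
        · exact absurd h'' hDne
      have := pow_eq_zero_iff (n := 2) (by norm_num) |>.mp hsq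
      linarith
    · intro h
      rw [h] at e2
      simp at e2
      linarith
end

section
/- Let R > 0 and t⁻(R) < t < t⁺(R), and assume in addition R − t > 0 and R + t − 2Rt > 0. Set ζ₃ := rA²/(2R(1−t)t). Then the argument (R(1−2t) + t(p−1))/(t√((2−p)(2R−p))) lies in [−1,1] for all p ∈ [0,ζ₃], and ∫₀^{ζ₃} arccos( (R(1−2t) + t(p−1))/(t√((2−p)(2R−p))) ) dp = 2R·arctan(rA/(R−t)) + 2·arctan(rA/(R+t−2Rt)) − rA/t, where arctan is the standard determination with values in (−π/2, π/2). -/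
open MeasureTheory

set_option maxHeartbeats 4000000

/-- Let `R > 0`, `t⁻(R) < t < t⁺(R)`, `R − t > 0`, `R + t − 2Rt > 0`, and
`ζ₃ := rA²/(2R(1−t)t)`. Then `(R(1−2t)+t(p−1))/(t√((2−p)(2R−p))) ∈ [−1,1]` for all
`p ∈ [0,ζ₃]`, and
`∫₀^{ζ₃} arccos((R(1−2t)+t(p−1))/(t√((2−p)(2R−p)))) dp
  = 2R·arctan(rA/(R−t)) + 2·arctan(rA/(R+t−2Rt)) − rA/t`. -/
theorem stmt_13 (R t : ℝ) (hR : 0 < R) (ht : tminus R < t ∧ t < tplus R)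
    (hRt : 0 < R - t) (hRt' : 0 < R + t - 2*R*t)
    (rA : ℝ) (hrA : rA = Real.sqrt (-R^2*(1 - 2*t)^2 + 2*R*t - t^2))
    (ζ₃ : ℝ) (hζ₃ : ζ₃ = rA^2/(2*R*(1-t)*t)) :
    (∀ p ∈ Set.Icc (0:ℝ) ζ₃,
      (R*(1-2*t) + t*(p-1)) / (t * Real.sqrt ((2-p)*(2*R-p))) ∈ Set.Icc (-1:ℝ) 1) ∧
    ∫ p in (0:ℝ)..ζ₃,
        Real.arccos ((R*(1-2*t) + t*(p-1)) / (t * Real.sqrt ((2-p)*(2*R-p))))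
      = 2*R*Real.arctan (rA/(R - t)) + 2*Real.arctan (rA/(R + t - 2*R*t)) - rA/t := by
  obtain ⟨htm0, htp0⟩ := ht
  have hsR : Real.sqrt R ^ 2 = R := Real.sq_sqrt hR.le
  have hsRpos : 0 < Real.sqrt R := Real.sqrt_pos.2 hR
  have hden1 : 0 < 2*R + 1 + 2*Real.sqrt R := by positivity
  have hden2 : 0 < 2*R + 1 - 2*Real.sqrt R := by nlinarith [hsR, hsRpos]
  have ht0 : 0 < t := lt_trans (by unfold tminus; positivity) htm0
  have htm : R < t * (2*R + 1 + 2*Real.sqrt R) := by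
    rw [tminus, div_lt_iff₀ hden1] at htm0; linarith
  have htp : t * (2*R + 1 - 2*Real.sqrt R) < R := by
    rw [tplus, lt_div_iff₀ hden2] at htp0; linarith
  have ht1 : t < 1 := by nlinarith [hsR, hsRpos]
  have hQ0pos : 0 < -R^2*(1 - 2*t)^2 + 2*R*t - t^2 := by nlinarith [htm, htp, hsR]
  have hrA2 : rA^2 = -R^2*(1 - 2*t)^2 + 2*R*t - t^2 := by
    rw [hrA]; exact Real.sq_sqrt hQ0pos.le
  have hrApos : 0 < rA := by rw [hrA]; exact Real.sqrt_pos.2 hQ0pos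
  have hcpos : 0 < 2*R*t*(1-t) := by nlinarith
  have hne : (2*R*(1-t)*t) ≠ 0 := by
    have : 0 < 2*R*(1-t)*t := by nlinarith
    exact this.ne'
  have hz3 : 2*R*t*(1-t) * ζ₃ = rA^2 := by
    have h : 2*R*t*(1-t) = 2*R*(1-t)*t := by ring
    rw [hζ₃, h, mul_div_cancel₀ _ hne]
  have hz3pos : 0 < ζ₃ := by
    rw [hζ₃]; apply div_pos (by positivity) (by nlinarith)
  have ea : 2*(2*R*t*(1-t)) - rA^2 = (R + t - 2*R*t)^2 := by rw [hrA2]; ring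
  have eb : 2*R*(2*R*t*(1-t)) - rA^2 = (R - t)^2 := by rw [hrA2]; ring
  have hz2 : ζ₃ < 2 := by
    have h : 2*R*t*(1-t)*ζ₃ < 2*R*t*(1-t)*2 := by linarith [hz3, ea, pow_pos hRt' 2]
    exact lt_of_mul_lt_mul_left h hcpos.le
  have hz2R : ζ₃ < 2*R := by
    have h : 2*R*t*(1-t)*ζ₃ < 2*R*t*(1-t)*(2*R) := by linarith [hz3, eb, pow_pos hRt 2]
    exact lt_of_mul_lt_mul_left h hcpos.le
  -- key identity
  have hkey : ∀ p : ℝ, t^2*((2-p)*(2*R-p)) - (R*(1-2*t) + t*(p-1))^2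
      = rA^2 - 2*R*t*(1-t)*p := by
    intro p; rw [hrA2]; ring
  -- Part 1
  have part1 : ∀ p ∈ Set.Icc (0:ℝ) ζ₃,
      (R*(1-2*t) + t*(p-1)) / (t * Real.sqrt ((2-p)*(2*R-p))) ∈ Set.Icc (-1:ℝ) 1 := by
    intro p hp
    obtain ⟨hp0, hpz⟩ := hp
    have hS : 0 < (2-p)*(2*R-p) := by nlinarith
    have hsS : 0 < Real.sqrt ((2-p)*(2*R-p)) := Real.sqrt_pos.2 hS
    have hsS2 : Real.sqrt ((2-p)*(2*R-p))^2 = (2-p)*(2*R-p) := Real.sq_sqrt hS.le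
    have hQ : 0 ≤ rA^2 - 2*R*t*(1-t)*p := by nlinarith [hz3]
    have hN2 : (R*(1-2*t) + t*(p-1))^2 ≤ (t * Real.sqrt ((2-p)*(2*R-p)))^2 := by
      have := hkey p; nlinarith
    have hD : 0 < t * Real.sqrt ((2-p)*(2*R-p)) := by positivity
    obtain ⟨hA, hB⟩ := abs_le_of_sq_le_sq' hN2 hD.le
    constructor
    · rw [le_div_iff₀ hD]; linarith
    · rw [div_le_one hD]; linarith
  refine ⟨part1, ?_⟩
  have hane : R + t - 2*R*t ≠ 0 := hRt'.ne'
  have hbne : R - t ≠ 0 := hRt.ne'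
  set F : ℝ → ℝ := fun p =>
    p * Real.arccos ((R*(1-2*t) + t*(p-1)) / (t * Real.sqrt ((2-p)*(2*R-p))))
    + Real.sqrt (rA^2 - 2*R*t*(1-t)*p) / t
    - 2 * Real.arctan (Real.sqrt (rA^2 - 2*R*t*(1-t)*p) / (R + t - 2*R*t))
    - 2*R * Real.arctan (Real.sqrt (rA^2 - 2*R*t*(1-t)*p) / (R - t)) with hF
  -- continuity facts
  have hSpos : ∀ p ∈ Set.Icc (0:ℝ) ζ₃, 0 < (2-p)*(2*R-p) := by
    rintro p ⟨hp0, hpz⟩; exact mul_pos (by linarith) (by linarith)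
  have hNcont : Continuous fun p : ℝ => R*(1-2*t) + t*(p-1) := by continuity
  have hsScont : Continuous fun p : ℝ => t * Real.sqrt ((2-p)*(2*R-p)) := by
    exact continuous_const.mul (((continuous_const.sub continuous_id).mul
      (continuous_const.sub continuous_id)).sqrt)
  have hgcont : ContinuousOn
      (fun p : ℝ => (R*(1-2*t) + t*(p-1)) / (t * Real.sqrt ((2-p)*(2*R-p))))
      (Set.Icc (0:ℝ) ζ₃) :=
    ContinuousOn.div hNcont.continuousOn hsScont.continuousOn
      (fun p hp => by have := hSpos p hp; positivity)
  have hfcont : ContinuousOn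
      (fun p : ℝ => Real.arccos ((R*(1-2*t) + t*(p-1)) / (t * Real.sqrt ((2-p)*(2*R-p)))))
      (Set.Icc (0:ℝ) ζ₃) := Real.continuous_arccos.comp_continuousOn hgcont
  have hint : IntervalIntegrable
      (fun p : ℝ => Real.arccos ((R*(1-2*t) + t*(p-1)) / (t * Real.sqrt ((2-p)*(2*R-p)))))
      volume 0 ζ₃ := by
    apply ContinuousOn.intervalIntegrable
    rwa [Set.uIcc_of_le hz3pos.le]
  have hsQcont : Continuous fun p : ℝ => Real.sqrt (rA^2 - 2*R*t*(1-t)*p) := by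
    exact (continuous_const.sub (continuous_const.mul continuous_id)).sqrt
  have hFcont : ContinuousOn F (Set.Icc (0:ℝ) ζ₃) := by
    apply ContinuousOn.sub; apply ContinuousOn.sub; apply ContinuousOn.add
    · exact continuous_id.continuousOn.mul hfcont
    · exact (hsQcont.div_const t).continuousOn
    · exact (continuous_const.mul (Real.continuous_arctan.comp
        (hsQcont.div_const _))).continuousOn
    · exact (continuous_const.mul (Real.continuous_arctan.comp
        (hsQcont.div_const _))).continuousOn
  -- endpoint values
  have hQz : rA^2 - 2*R*t*(1-t)*ζ₃ = 0 := by linarith [hz3]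
  have hFz : F ζ₃ = 0 := by
    have hSz : 0 < (2-ζ₃)*(2*R-ζ₃) := mul_pos (by linarith) (by linarith)
    have hNz : 0 < R*(1-2*t) + t*(ζ₃-1) := by
      have h : 2*R*t*(1-t) * (R*(1-2*t) + t*(ζ₃-1)) = t*((R-t)*(R+t-2*R*t)) := by
        linear_combination t * hz3 + t * hrA2
      have hpos : 0 < 2*R*t*(1-t) * (R*(1-2*t) + t*(ζ₃-1)) := by
        rw [h]; exact mul_pos ht0 (mul_pos hRt hRt')
      exact (mul_pos_iff_of_pos_left hcpos).mp hpos
    have hN2 : (R*(1-2*t) + t*(ζ₃-1))^2 = t^2*((2-ζ₃)*(2*R-ζ₃)) := by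
      have := hkey ζ₃; linarith
    have hts : t * Real.sqrt ((2-ζ₃)*(2*R-ζ₃)) = R*(1-2*t) + t*(ζ₃-1) := by
      rw [show (2-ζ₃)*(2*R-ζ₃) = ((R*(1-2*t) + t*(ζ₃-1))/t)^2 by
        rw [div_pow]; rw [hN2]; field_simp]
      rw [Real.sqrt_sq (by positivity)]
      field_simp
    have hgz : (R*(1-2*t) + t*(ζ₃-1)) / (t * Real.sqrt ((2-ζ₃)*(2*R-ζ₃))) = 1 := by
      rw [hts, div_self hNz.ne']
    simp only [hF, hgz, hQz, Real.arccos_one, Real.sqrt_zero, mul_zero, zero_div,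
      Real.arctan_zero, sub_zero, add_zero]
  have hF0 : F 0 = rA/t - 2*Real.arctan (rA/(R+t-2*R*t)) - 2*R*Real.arctan (rA/(R-t)) := by
    simp only [hF, mul_zero, sub_zero, zero_mul, Real.sqrt_sq hrApos.le, zero_add]
  -- derivative
  have hderiv : ∀ x ∈ Set.Ioo (0:ℝ) ζ₃, HasDerivAt F
      (Real.arccos ((R*(1-2*t) + t*(x-1)) / (t * Real.sqrt ((2-x)*(2*R-x))))) x := by
    intro x hx
    obtain ⟨hx0, hxz⟩ := hx
    have hS : 0 < (2-x)*(2*R-x) := mul_pos (by linarith) (by linarith)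
    have hsS : 0 < Real.sqrt ((2-x)*(2*R-x)) := Real.sqrt_pos.2 hS
    have hsS2 : Real.sqrt ((2-x)*(2*R-x))^2 = (2-x)*(2*R-x) := Real.sq_sqrt hS.le
    have hQx : 0 < rA^2 - 2*R*t*(1-t)*x := by
      have h := mul_pos hcpos (sub_pos.2 hxz)
      linarith [hz3, h]
    have hsQ : 0 < Real.sqrt (rA^2 - 2*R*t*(1-t)*x) := Real.sqrt_pos.2 hQx
    have hsQ2 : Real.sqrt (rA^2 - 2*R*t*(1-t)*x)^2 = rA^2 - 2*R*t*(1-t)*x :=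
      Real.sq_sqrt hQx.le
    have hN2 : (R*(1-2*t) + t*(x-1))^2
        = t^2*((2-x)*(2*R-x)) - (rA^2 - 2*R*t*(1-t)*x) := by
      have := hkey x; linarith
    have hDpos : 0 < t * Real.sqrt ((2-x)*(2*R-x)) := by positivity
    have hglt : ((R*(1-2*t) + t*(x-1)) / (t * Real.sqrt ((2-x)*(2*R-x))))^2 < 1 := by
      rw [div_pow, div_lt_one (by positivity)]
      have e : (t * Real.sqrt ((2-x)*(2*R-x)))^2 = t^2*((2-x)*(2*R-x)) := by
        rw [mul_pow, hsS2]
      linarith [hN2, hQx, e]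
    have hgne1 : (R*(1-2*t) + t*(x-1)) / (t * Real.sqrt ((2-x)*(2*R-x))) ≠ 1 := by
      intro h; rw [h] at hglt; norm_num at hglt
    have hgne1' : (R*(1-2*t) + t*(x-1)) / (t * Real.sqrt ((2-x)*(2*R-x))) ≠ -1 := by
      intro h; rw [h] at hglt; norm_num at hglt
    have h1g : Real.sqrt (1 - ((R*(1-2*t) + t*(x-1)) / (t * Real.sqrt ((2-x)*(2*R-x))))^2)
        = Real.sqrt (rA^2 - 2*R*t*(1-t)*x) / (t * Real.sqrt ((2-x)*(2*R-x))) := by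
      rw [show 1 - ((R*(1-2*t) + t*(x-1)) / (t * Real.sqrt ((2-x)*(2*R-x))))^2
          = (Real.sqrt (rA^2 - 2*R*t*(1-t)*x) / (t * Real.sqrt ((2-x)*(2*R-x))))^2 by
        rw [div_pow, div_pow, mul_pow, hsS2, hsQ2, hN2]
        have hts : t^2*((2-x)*(2*R-x)) ≠ 0 := by positivity
        field_simp
        rw [eq_div_iff hS.ne', sub_mul, div_mul_cancel₀ _ hS.ne']; ring]
      exact Real.sqrt_sq (by positivity)
    -- derivatives
    have hSder : HasDerivAt (fun p : ℝ => (2-p)*(2*R-p))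
        ((-1)*(2*R-x) + (2-x)*(-1)) x := by
      have h1 : HasDerivAt (fun p : ℝ => 2 - p) (-1) x := by
        simpa using (hasDerivAt_id x).const_sub 2
      have h2 : HasDerivAt (fun p : ℝ => 2*R - p) (-1) x := by
        simpa using (hasDerivAt_id x).const_sub (2*R)
      exact h1.mul h2
    have hsSder : HasDerivAt (fun p : ℝ => Real.sqrt ((2-p)*(2*R-p)))
        (((-1)*(2*R-x) + (2-x)*(-1))/(2*Real.sqrt ((2-x)*(2*R-x)))) x :=
      hSder.sqrt hS.ne'
    have hNder : HasDerivAt (fun p : ℝ => R*(1-2*t) + t*(p-1)) (t*1) x := by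
      exact (((hasDerivAt_id x).sub_const 1).const_mul t).const_add (R*(1-2*t))
    have hgder : HasDerivAt
        (fun p : ℝ => (R*(1-2*t) + t*(p-1)) / (t * Real.sqrt ((2-p)*(2*R-p))))
        ((t*1 * (t * Real.sqrt ((2-x)*(2*R-x)))
          - (R*(1-2*t) + t*(x-1)) * (t * (((-1)*(2*R-x) + (2-x)*(-1))/(2*Real.sqrt ((2-x)*(2*R-x))))))
          / (t * Real.sqrt ((2-x)*(2*R-x)))^2) x :=
      hNder.div (hsSder.const_mul t) hDpos.ne'
    have harc : HasDerivAt
        (fun p : ℝ => Real.arccos ((R*(1-2*t) + t*(p-1)) / (t * Real.sqrt ((2-p)*(2*R-p)))))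
        (-(1/Real.sqrt (1 - ((R*(1-2*t) + t*(x-1)) / (t * Real.sqrt ((2-x)*(2*R-x))))^2))
          * ((t*1 * (t * Real.sqrt ((2-x)*(2*R-x)))
          - (R*(1-2*t) + t*(x-1)) * (t * (((-1)*(2*R-x) + (2-x)*(-1))/(2*Real.sqrt ((2-x)*(2*R-x))))))
          / (t * Real.sqrt ((2-x)*(2*R-x)))^2)) x := by
      exact
        HasDerivAt.comp (h₂ := Real.arccos) x (Real.hasDerivAt_arccos hgne1' hgne1) hgder
    have h1 := (hasDerivAt_id x).mul harc
    have hQder : HasDerivAt (fun p : ℝ => rA^2 - 2*R*t*(1-t)*p) (-(2*R*t*(1-t)*1)) x := by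
      exact ((hasDerivAt_id x).const_mul (2*R*t*(1-t))).const_sub (rA^2)
    have hsQder : HasDerivAt (fun p : ℝ => Real.sqrt (rA^2 - 2*R*t*(1-t)*p))
        ((-(2*R*t*(1-t)*1))/(2*Real.sqrt (rA^2 - 2*R*t*(1-t)*x))) x :=
      hQder.sqrt hQx.ne'
    have h2 := hsQder.div_const t
    have h3 := (hsQder.div_const (R + t - 2*R*t)).arctan.const_mul (2:ℝ)
    have h4 := (hsQder.div_const (R - t)).arctan.const_mul (2*R)
    have hF' := ((h1.add h2).sub h3).sub h4
    refine hF'.congr_deriv ?_; symm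
    rw [h1g]
    set u := Real.sqrt ((2-x)*(2*R-x)) with hu
    set w := Real.sqrt (rA^2 - 2*R*t*(1-t)*x) with hw
    have h2x : (0:ℝ) < 2 - x := by linarith
    have h2Rx : (0:ℝ) < 2*R - x := by linarith
    have hd1 : (0:ℝ) < 1 + (w / (R + t - 2*R*t))^2 := by positivity
    have hd2 : (0:ℝ) < 1 + (w / (R - t))^2 := by positivity
    have hQa : (R + t - 2*R*t)^2 + w^2 = 2*R*t*(1-t)*(2-x) := by
      linear_combination hsQ2 + hrA2
    have hQb : (R - t)^2 + w^2 = 2*R*t*(1-t)*(2*R-x) := by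
      linear_combination hsQ2 + hrA2
    have e3 : 1/(1+(w/(R + t - 2*R*t))^2) * (-(2*R*t*(1-t)*1)/(2*w)/(R + t - 2*R*t))
        = -(R + t - 2*R*t)/(2*(2-x)*w) := by
      rw [div_pow]
      rw [show 1 + w^2/(R + t - 2*R*t)^2 = (2*R*t*(1-t)*(2-x))/(R + t - 2*R*t)^2 by
        rw [one_add_div (pow_ne_zero 2 hane), hQa]]
      field_simp
      rw [div_self (sub_pos.2 ht1).ne']
    have e4 : 1/(1+(w/(R - t))^2) * (-(2*R*t*(1-t)*1)/(2*w)/(R - t))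
        = -(R - t)/(2*(2*R-x)*w) := by
      rw [div_pow]
      rw [show 1 + w^2/(R - t)^2 = (2*R*t*(1-t)*(2*R-x))/(R - t)^2 by
        rw [one_add_div (pow_ne_zero 2 hbne), hQb]]
      field_simp
      rw [div_self (sub_pos.2 ht1).ne']
    rw [e3, e4]
    simp only [id]
    have hRx2 : R*2 - x ≠ 0 := ne_of_gt (by linarith)
    field_simp
    rw [hsS2]
    ring
  have key := intervalIntegral.integral_eq_sub_of_hasDerivAt_of_le hz3pos.le hFcont hderiv hint
  rw [key, hFz, hF0]
  ring
end

section
/- Let R > 0 and t⁻(R) < t < t⁺(R), and assume R − t > 0 and R + t − 2Rt > 0. Set Q(p) := rA² + 2R(t−1)t·p and ζ₃ := rA²/(2R(1−t)t), so Q > 0 on (0,ζ₃). Then the function G(p) := √(Q(p)) + p·t·arccos( (R(1−2t)+t(p−1))/(t√((2−p)(2R−p))) ) − 2Rt·arctan(√(Q(p))/(R−t)) − 2t·arctan(√(Q(p))/(R+t−2Rt)) is differentiable on (0,ζ₃) with derivative G'(p) = t·arccos( (R(1−2t)+t(p−1))/(t√((2−p)(2R−p))) ). -/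
set_option maxHeartbeats 1000000

/-- Let `R > 0`, `t⁻(R) < t < t⁺(R)`, `R − t > 0`, `R + t − 2Rt > 0`, and set
`Q(p) := rA² + 2R(t−1)t·p`, `ζ₃ := rA²/(2R(1−t)t)`, so `Q > 0` on `(0,ζ₃)`. Then
`G(p) := √(Q(p)) + pt·arccos((R(1−2t)+t(p−1))/(t√((2−p)(2R−p))))
  − 2Rt·arctan(√(Q(p))/(R−t)) − 2t·arctan(√(Q(p))/(R+t−2Rt))`
is differentiable on `(0,ζ₃)` with derivative
`G'(p) = t·arccos((R(1−2t)+t(p−1))/(t√((2−p)(2R−p))))`. -/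
theorem stmt_14 (R t : ℝ) (hR : 0 < R) (ht : tminus R < t ∧ t < tplus R)
    (hRt : 0 < R - t) (hRt' : 0 < R + t - 2*R*t)
    (rA : ℝ) (hrA : rA = Real.sqrt (-R^2*(1 - 2*t)^2 + 2*R*t - t^2))
    (Q : ℝ → ℝ) (hQ : ∀ p, Q p = rA^2 + 2*R*(t-1)*t*p)
    (ζ₃ : ℝ) (hζ₃ : ζ₃ = rA^2/(2*R*(1-t)*t))
    (G : ℝ → ℝ)
    (hG : ∀ p, G p = Real.sqrt (Q p)
      + p*t*Real.arccos ((R*(1-2*t) + t*(p-1)) / (t * Real.sqrt ((2-p)*(2*R-p))))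
      - 2*R*t*Real.arctan (Real.sqrt (Q p)/(R - t))
      - 2*t*Real.arctan (Real.sqrt (Q p)/(R + t - 2*R*t))) :
    (∀ p ∈ Set.Ioo (0:ℝ) ζ₃, 0 < Q p) ∧
    ∀ p ∈ Set.Ioo (0:ℝ) ζ₃,
      HasDerivAt G
        (t * Real.arccos ((R*(1-2*t) + t*(p-1)) / (t * Real.sqrt ((2-p)*(2*R-p))))) p := by
  obtain ⟨htm, htp⟩ := ht
  have hGF : G = fun p => Real.sqrt (Q p)
      + p*t*Real.arccos ((R*(1-2*t) + t*(p-1)) / (t * Real.sqrt ((2-p)*(2*R-p))))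
      - 2*R*t*Real.arctan (Real.sqrt (Q p)/(R - t))
      - 2*t*Real.arctan (Real.sqrt (Q p)/(R + t - 2*R*t)) := funext hG
  subst hGF
  have hs : Real.sqrt R ^ 2 = R := Real.sq_sqrt hR.le
  have hs0 : 0 < Real.sqrt R := Real.sqrt_pos.mpr hR
  have hden1 : 0 < 2*R + 1 + 2*Real.sqrt R := by positivity
  have hden2 : 0 < 2*R + 1 - 2*Real.sqrt R := by nlinarith [sq_nonneg (Real.sqrt R - 1)]
  have hA : R < t*(2*R + 1 + 2*Real.sqrt R) := by
    rw [tminus, div_lt_iff₀ hden1] at htm; linarith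
  have hB : t*(2*R + 1 - 2*Real.sqrt R) < R := by
    rw [tplus, lt_div_iff₀ hden2] at htp; linarith
  have ht0 : 0 < t := by nlinarith
  have ht1 : t < 1 := by nlinarith
  have hE : 0 < -R^2*(1 - 2*t)^2 + 2*R*t - t^2 := by
    nlinarith [mul_pos (show 0 < t*(2*R + 1 + 2*Real.sqrt R) - R by linarith)
      (show 0 < R - t*(2*R + 1 - 2*Real.sqrt R) by linarith)]
  have hrA2 : rA^2 = -R^2*(1 - 2*t)^2 + 2*R*t - t^2 := by
    rw [hrA, Real.sq_sqrt hE.le]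
  have h2Rt : 0 < 2*R*(1-t)*t := by
    have : 0 < 2*R*(1-t) := by nlinarith
    exact mul_pos this ht0
  have hQpos : ∀ p ∈ Set.Ioo (0:ℝ) ζ₃, 0 < Q p := by
    intro p hp
    have h2 := hp.2
    rw [hζ₃, lt_div_iff₀ h2Rt] at h2
    rw [hQ]; nlinarith [hp.1]
  refine ⟨hQpos, ?_⟩
  intro p hp
  have hp0 : 0 < p := hp.1
  have hQp : 0 < Q p := hQpos p hp
  have hQpv : 0 < rA^2 + 2*R*(t-1)*t*p := by rw [hQ] at hQp; exact hQp
  have hQE : 0 < (-R^2*(1 - 2*t)^2 + 2*R*t - t^2) + 2*R*(t-1)*t*p := by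
    rw [← hrA2]; exact hQpv
  have hp2 : p < 2 := by
    by_contra h
    push_neg at h
    have h1 : 0 ≤ 2*R*(1-t)*t*(p-2) := mul_nonneg h2Rt.le (by linarith)
    nlinarith [sq_nonneg (R + t - 2*R*t)]
  have hp2R : p < 2*R := by
    by_contra h
    push_neg at h
    have h1 : 0 ≤ 2*R*(1-t)*t*(p-2*R) := mul_nonneg h2Rt.le (by linarith)
    nlinarith [sq_nonneg (R - t)]
  have hD : 0 < (2-p)*(2*R-p) := mul_pos (by linarith) (by linarith)
  set sQ := Real.sqrt (Q p) with hsQdef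
  set sD := Real.sqrt ((2-p)*(2*R-p)) with hsDdef
  have hsQ0 : 0 < sQ := Real.sqrt_pos.mpr hQp
  have hsD0 : 0 < sD := Real.sqrt_pos.mpr hD
  have hsQ2 : sQ^2 = Q p := Real.sq_sqrt hQp.le
  have hsD2 : sD^2 = (2-p)*(2*R-p) := Real.sq_sqrt hD.le
  -- derivative of Q
  have hQd : HasDerivAt Q (2*R*(t-1)*t) p := by
    have h : HasDerivAt (fun x : ℝ => rA^2 + 2*R*(t-1)*t*x) (2*R*(t-1)*t) p := by
      exact (((hasDerivAt_id' p).const_mul (2*R*(t-1)*t)).const_add (rA^2)).congr_deriv (mul_one _)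
    exact h.congr_of_eventuallyEq (Filter.Eventually.of_forall fun x => hQ x)
  have hsQd : HasDerivAt (fun x => Real.sqrt (Q x)) (1/(2*sQ) * (2*R*(t-1)*t)) p :=
    (Real.hasDerivAt_sqrt hQp.ne').comp p hQd
  -- derivative of D and sqrt D
  have hDd : HasDerivAt (fun x : ℝ => (2-x)*(2*R-x)) ((0-1)*(2*R-p) + (2-p)*(0-1)) p :=
    ((hasDerivAt_const p 2).sub (hasDerivAt_id p)).mul
      ((hasDerivAt_const p (2*R)).sub (hasDerivAt_id p))
  have hsDd : HasDerivAt (fun x => Real.sqrt ((2-x)*(2*R-x)))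
      (1/(2*sD) * ((0-1)*(2*R-p) + (2-p)*(0-1))) p :=
    (Real.hasDerivAt_sqrt hD.ne').comp p hDd
  -- the arccos argument
  set u : ℝ → ℝ := fun x => (R*(1-2*t) + t*(x-1)) / (t * Real.sqrt ((2-x)*(2*R-x))) with hu
  have hNd : HasDerivAt (fun x : ℝ => R*(1-2*t) + t*(x-1)) t p := by
    exact ((((hasDerivAt_id' p).sub_const 1).const_mul t).const_add (R*(1-2*t))).congr_deriv
      (mul_one _)
  have hdenne : t * sD ≠ 0 := by positivity
  have hud : HasDerivAt u
      ((t * (t*sD) - (R*(1-2*t) + t*(p-1)) * (t * (1/(2*sD) * ((0-1)*(2*R-p) + (2-p)*(0-1)))))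
        / (t*sD)^2) p :=
    hNd.div (hsDd.const_mul t) hdenne
  -- bounds on u p
  have hupv : u p = (R*(1-2*t) + t*(p-1)) / (t*sD) := by simp only [hu, hsDdef]
  have hu2 : 1 - (u p)^2 = Q p / (t*sD)^2 := by
    rw [hupv, div_pow, eq_div_iff (by positivity : (t*sD)^2 ≠ 0)]
    rw [hQ, hrA2]
    field_simp
    linear_combination (t^2) * hsD2
  have h1u : 0 < 1 - (u p)^2 := by
    rw [hu2]; positivity
  have hune1 : u p ≠ -1 := by intro h; rw [h] at h1u; norm_num at h1u
  have hune2 : u p ≠ 1 := by intro h; rw [h] at h1u; norm_num at h1u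
  have hsqrt1u : Real.sqrt (1 - (u p)^2) = sQ/(t*sD) := by
    rw [hu2, show Q p / (t*sD)^2 = (sQ/(t*sD))^2 by rw [div_pow, hsQ2],
      Real.sqrt_sq (by positivity)]
  have harc : HasDerivAt (fun x => Real.arccos (u x))
      (-(1/Real.sqrt (1 - (u p)^2)) *
        ((t * (t*sD) - (R*(1-2*t) + t*(p-1)) * (t * (1/(2*sD) * ((0-1)*(2*R-p) + (2-p)*(0-1)))))
          / (t*sD)^2)) p :=
    (Real.hasDerivAt_arccos hune1 hune2).comp p hud
  have hmul : HasDerivAt (fun x => x*t*Real.arccos (u x))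
      ((1*t) * Real.arccos (u p) + (p*t) *
        (-(1/Real.sqrt (1 - (u p)^2)) *
        ((t * (t*sD) - (R*(1-2*t) + t*(p-1)) * (t * (1/(2*sD) * ((0-1)*(2*R-p) + (2-p)*(0-1)))))
          / (t*sD)^2))) p :=
    (((hasDerivAt_id p).mul_const t)).mul harc
  have hat1 : HasDerivAt (fun x => Real.arctan (Real.sqrt (Q x)/(R-t)))
      (1/(1 + (sQ/(R-t))^2) * (1/(2*sQ) * (2*R*(t-1)*t) / (R-t))) p :=
    (Real.hasDerivAt_arctan _).comp p (hsQd.div_const (R-t))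
  have hat2 : HasDerivAt (fun x => Real.arctan (Real.sqrt (Q x)/(R+t-2*R*t)))
      (1/(1 + (sQ/(R+t-2*R*t))^2) * (1/(2*sQ) * (2*R*(t-1)*t) / (R+t-2*R*t))) p :=
    (Real.hasDerivAt_arctan _).comp p (hsQd.div_const (R+t-2*R*t))
  have hval : 1/(2*sQ) * (2*R*(t-1)*t)
        + ((1*t) * Real.arccos (u p) + (p*t) *
          (-(1/Real.sqrt (1 - (u p)^2)) *
          ((t * (t*sD) - (R*(1-2*t) + t*(p-1)) * (t * (1/(2*sD) * ((0-1)*(2*R-p) + (2-p)*(0-1)))))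
            / (t*sD)^2)))
        - 2*R*t * (1/(1 + (sQ/(R-t))^2) * (1/(2*sQ) * (2*R*(t-1)*t) / (R-t)))
        - 2*t * (1/(1 + (sQ/(R+t-2*R*t))^2) * (1/(2*sQ) * (2*R*(t-1)*t) / (R+t-2*R*t)))
      = t * Real.arccos (u p) := by
    rw [hsqrt1u]
    -- rewrite the arctan denominators
    have hc1 : (1:ℝ) + (sQ/(R-t))^2 = ((R-t)^2 + Q p)/(R-t)^2 := by
      rw [div_pow, hsQ2]
      field_simp
    have hc2 : (1:ℝ) + (sQ/(R+t-2*R*t))^2 = ((R+t-2*R*t)^2 + Q p)/(R+t-2*R*t)^2 := by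
      rw [div_pow, hsQ2]
      rw [one_add_div (pow_ne_zero 2 hRt'.ne')]
    rw [hc1, hc2]
    have hP1 : 0 < (R-t)^2 + Q p := by positivity
    have hP2 : 0 < (R+t-2*R*t)^2 + Q p := by positivity
    -- simplify each non-arccos summand
    have e1 : 1/(2*sQ) * (2*R*(t-1)*t) = (R*(t-1)*t)/sQ := by
      field_simp
    have e2 : (p*t) * (-(1/(sQ/(t*sD))) *
        ((t * (t*sD) - (R*(1-2*t) + t*(p-1)) * (t * (1/(2*sD) * ((0-1)*(2*R-p) + (2-p)*(0-1)))))
          / (t*sD)^2))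
        = (-(p*t*(t*((2-p)*(2*R-p)) - (R*(1-2*t) + t*(p-1))*(p-R-1)) / ((2-p)*(2*R-p)))) / sQ := by
      rw [show (2-p)*(2*R-p) = sD^2 from hsD2.symm]
      field_simp
      ring
    have e3 : 2*R*t * (1/(((R-t)^2 + Q p)/(R-t)^2) * (R*(t-1)*t/sQ / (R-t)))
        = (2*R^2*(t-1)*t^2*(R-t)/((R-t)^2 + Q p)) / sQ := by
      field_simp
    have e4 : 2*t * (1/(((R+t-2*R*t)^2 + Q p)/(R+t-2*R*t)^2) * (R*(t-1)*t/sQ / (R+t-2*R*t)))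
        = (2*R*(t-1)*t^2*(R+t-2*R*t)/((R+t-2*R*t)^2 + Q p)) / sQ := by
      field_simp
    rw [e1, e2, e3, e4]
    have hrest : (R*(t-1)*t)/sQ
        + (-(p*t*(t*((2-p)*(2*R-p)) - (R*(1-2*t) + t*(p-1))*(p-R-1)) / ((2-p)*(2*R-p)))) / sQ
        - (2*R^2*(t-1)*t^2*(R-t)/((R-t)^2 + Q p)) / sQ
        - (2*R*(t-1)*t^2*(R+t-2*R*t)/((R+t-2*R*t)^2 + Q p)) / sQ = 0 := by
      rw [hQ, hrA2]
      rw [show (R-t)^2 + (-R^2*(1 - 2*t)^2 + 2*R*t - t^2 + 2*R*(t-1)*t*p)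
          = 2*R*t*(1-t)*(2*R-p) from by ring,
        show (R+t-2*R*t)^2 + (-R^2*(1 - 2*t)^2 + 2*R*t - t^2 + 2*R*(t-1)*t*p)
          = 2*R*t*(1-t)*(2-p) from by ring]
      rw [← add_div, ← sub_div, ← sub_div, div_eq_zero_iff]
      left
      have h2p : (2:ℝ) - p ≠ 0 := by linarith
      have h2Rp : 2*R - p ≠ 0 := by linarith
      have h1t : (1:ℝ) - t ≠ 0 := by linarith
      have hk : 2*R*t*(1-t) ≠ 0 := mul_ne_zero (mul_ne_zero (mul_ne_zero two_ne_zero hR.ne') ht0.ne') h1t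
      rw [← neg_div, add_div' _ _ _ (mul_ne_zero h2p h2Rp), div_sub_div _ _ (mul_ne_zero h2p h2Rp) (mul_ne_zero hk h2Rp),
        div_sub_div _ _ (mul_ne_zero (mul_ne_zero h2p h2Rp) (mul_ne_zero hk h2Rp)) (mul_ne_zero hk h2p), div_eq_zero_iff]
      left
      ring
    linarith [hrest]
  have hGd : HasDerivAt (fun x => Real.sqrt (Q x) + x*t*Real.arccos (u x)
        - 2*R*t*Real.arctan (Real.sqrt (Q x)/(R - t))
        - 2*t*Real.arctan (Real.sqrt (Q x)/(R + t - 2*R*t)))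
      (t * Real.arccos (u p)) p :=
    hval ▸ (((hsQd.add hmul).sub (hat1.const_mul (2*R*t))).sub (hat2.const_mul (2*t)))
  simp only [hu] at hGd
  rw [← hsDdef] at hGd
  exact hGd
end

section
/- Let n > 0 and c > 0, and set t := 1/(1+2c) ∈ (0,1). On ℝ³ × ℝ³ define L_z := n(z₁+z₂), G := (x₁x₂+y₁y₂+z₁z₂) + c(z₁−z₂), L' := n z₁ + n z₂ and H' := t(x₁x₂+y₁y₂+z₁z₂) + ((1−t)/2)(z₁−z₂) (the symmetrized coupled angular momenta Hamiltonian with R₁ = R₂ = n, for which b = (1−t)n/(2n) = (1−t)/2). Then L_z = L' and t·G = H' identically on ℝ³ × ℝ³; moreover c ↦ t = 1/(1+2c) is a strictly decreasing bijection from (0,∞) onto (0,1), and c ∈ (0,2) if and only if t ∈ (1/5, 1) = (t⁻(1), t⁺(1)). Hence the reduced Kepler problem in prolate spheroidal coordinates, with momentum map (L_z, G) on S² × S², defines the same momentum fibration as the coupled angular momenta with R₁ = R₂ = n, and its distinguished singular point is of focus-focus type exactly for c ∈ (0,2). -/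
/-- Let `n > 0`, `c > 0`, `t := 1/(1+2c) ∈ (0,1)`. With `L_z := n(z₁+z₂)`,
`G := (x₁x₂+y₁y₂+z₁z₂) + c(z₁−z₂)`, `L' := nz₁+nz₂` and
`H' := t(x₁x₂+y₁y₂+z₁z₂) + ((1−t)/2)(z₁−z₂)`, one has `L_z = L'` and `t·G = H'`
identically on `ℝ³ × ℝ³`; moreover `c ↦ 1/(1+2c)` is a strictly decreasing
bijection from `(0,∞)` onto `(0,1)`, and `c ∈ (0,2)` iff
`t ∈ (1/5,1) = (t⁻(1), t⁺(1))`. -/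
theorem stmt_15 (n c : ℝ) (hn : 0 < n) (hc : 0 < c)
    (t : ℝ) (ht : t = 1/(1 + 2*c)) :
    (0 < t ∧ t < 1) ∧
    (∀ x₁ y₁ z₁ x₂ y₂ z₂ : ℝ,
      n*(z₁ + z₂) = n*z₁ + n*z₂ ∧
      t * ((x₁*x₂ + y₁*y₂ + z₁*z₂) + c*(z₁ - z₂))
        = t*(x₁*x₂ + y₁*y₂ + z₁*z₂) + ((1-t)/2)*(z₁ - z₂)) ∧
    StrictAntiOn (fun c' : ℝ => 1/(1 + 2*c')) (Set.Ioi 0) ∧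
    Set.BijOn (fun c' : ℝ => 1/(1 + 2*c')) (Set.Ioi 0) (Set.Ioo 0 1) ∧
    (tminus 1 = 1/5 ∧ tplus 1 = 1) ∧
    ((0 < c ∧ c < 2) ↔ (1/5 < t ∧ t < 1)) := by
  have hden : (0:ℝ) < 1 + 2*c := by linarith
  have ht0 : 0 < t := by rw [ht]; positivity
  have ht1 : t < 1 := by
    rw [ht, div_lt_one hden]; linarith
  have key : t * (1 + 2*c) = 1 := by
    rw [ht]; field_simp
  have anti : StrictAntiOn (fun c' : ℝ => 1/(1 + 2*c')) (Set.Ioi 0) := by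
    intro a ha b hb hab
    simp only [Set.mem_Ioi] at ha hb
    have : (0:ℝ) < 1 + 2*a := by linarith
    have : (0:ℝ) < 1 + 2*b := by linarith
    apply one_div_lt_one_div_of_lt <;> linarith
  refine ⟨⟨ht0, ht1⟩, ?_, anti, ⟨?_, ?_, ?_⟩, ?_, ?_⟩
  · intro x₁ y₁ z₁ x₂ y₂ z₂
    constructor
    · ring
    · have : t * c = (1 - t)/2 := by
        have : 2 * (t * c) = 1 - t := by nlinarith [key]
        linarith
      linear_combination (z₁ - z₂) * this
  · intro a ha
    simp only [Set.mem_Ioi] at ha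
    have h1 : (0:ℝ) < 1 + 2*a := by linarith
    constructor
    · positivity
    · rw [div_lt_one h1]; linarith
  · exact anti.injOn
  · intro y hy
    obtain ⟨hy0, hy1⟩ := hy
    refine ⟨(1/y - 1)/2, ?_, ?_⟩
    · simp only [Set.mem_Ioi]
      have : 1 < 1/y := by rw [lt_div_iff₀ hy0]; linarith
      linarith
    · show 1/(1 + 2*((1/y - 1)/2)) = y
      rw [show (1:ℝ) + 2*((1/y - 1)/2) = 1/y by ring, one_div_one_div]
  · constructor
    · unfold tminus
      rw [Real.sqrt_one]; norm_num
    · unfold tplus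
      rw [Real.sqrt_one]; norm_num
  · constructor
    · rintro ⟨-, hc2⟩
      refine ⟨?_, ht1⟩
      rw [ht]
      rw [lt_div_iff₀ hden]; linarith
    · rintro ⟨h5, -⟩
      refine ⟨hc, ?_⟩
      rw [ht, lt_div_iff₀ hden] at h5
      linarith
end

section
/- Let R > 0 with R ≠ 1 and t⁻(R) < t < t⁺(R). Set u := −(1/2)·ln R, v := artanh( (R − t − 2Rt)/(2√R·t) ) (well defined since (R−t−2Rt)² < 4Rt² for t⁻ < t < t⁺), and a := e^{−v}·tanh(u/2) ≠ 0. Then (R²(2t−1) − R(1+t) + t)/((1−R)·rA) = (2e^{u}·cosh v + (1+e^{2u})·sinh v)/(1 − e^{2u}) = (a² − 1)/(2a). In particular the argument of the arctan in the linear l-coefficient of the Taylor series invariant (Theorem A) equals tan(−π/2 + 2·arctan(e^{−v}·tanh(u/2))), so that coefficient equals −π/2 + 2·arctan(e^{−v}·tanh(u/2)) modulo π. -/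
open Real

/-- The inverse hyperbolic tangent, `artanh x = (1/2)·ln((1+x)/(1−x))`. -/
noncomputable def artanh (x : ℝ) : ℝ := (1/2) * Real.log ((1 + x)/(1 - x))

private lemma sqc {A B : ℝ} (hA : 0 ≤ A) (hB : 0 ≤ B) (h : A^2 = B^2) : A = B := by
  have h0 : (A - B) * (A + B) = 0 := by linear_combination h
  rcases mul_eq_zero.mp h0 with h1 | h1 <;> linarith

set_option maxHeartbeats 1000000

/-- Let `R > 0`, `R ≠ 1`, `t⁻(R) < t < t⁺(R)`, `u := −(1/2)ln R`,
`v := artanh((R−t−2Rt)/(2√R·t))` and `a := e^{−v}·tanh(u/2) ≠ 0`. Then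
`(R²(2t−1) − R(1+t) + t)/((1−R)·rA) = (2e^u cosh v + (1+e^{2u}) sinh v)/(1−e^{2u})
  = (a²−1)/(2a)`; in particular that quantity equals
`tan(−π/2 + 2·arctan(e^{−v}tanh(u/2)))`, so the linear `l`-coefficient of the
Taylor series invariant equals `−π/2 + 2·arctan(e^{−v}tanh(u/2))` modulo `π`. -/
theorem stmt_17 (R t : ℝ) (hR : 0 < R) (hR1 : R ≠ 1)
    (ht : tminus R < t ∧ t < tplus R)
    (rA : ℝ) (hrA : rA = Real.sqrt (-R^2*(1 - 2*t)^2 + 2*R*t - t^2))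
    (u v a : ℝ)
    (hu : u = -(1/2)*Real.log R)
    (hv : v = _root_.artanh ((R - t - 2*R*t)/(2*Real.sqrt R*t)))
    (ha : a = Real.exp (-v) * Real.tanh (u/2)) :
    a ≠ 0 ∧
    (R^2*(2*t - 1) - R*(1 + t) + t)/((1 - R)*rA)
      = (2*Real.exp u*Real.cosh v + (1 + Real.exp (2*u))*Real.sinh v)
          /(1 - Real.exp (2*u)) ∧
    (R^2*(2*t - 1) - R*(1 + t) + t)/((1 - R)*rA) = (a^2 - 1)/(2*a) ∧
    Real.tan (-(π/2) + 2*Real.arctan a)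
      = (R^2*(2*t - 1) - R*(1 + t) + t)/((1 - R)*rA) := by
  obtain ⟨ht1, ht2⟩ := ht
  simp only [tminus, tplus] at ht1 ht2
  simp only [_root_.artanh] at hv
  set s := Real.sqrt R with hsdef
  have hs0 : 0 < s := Real.sqrt_pos.2 hR
  have hs2 : s ^ 2 = R := Real.sq_sqrt hR.le
  have hsne1 : s ≠ 1 := fun h => hR1 (by rw [← hs2, h]; norm_num)
  rw [← hs2] at ht1 ht2 hv hrA hu ⊢
  have hDm : (0:ℝ) < 2*s^2 + 1 + 2*s := by positivity
  have hDp : (0:ℝ) < 2*s^2 + 1 - 2*s := by nlinarith [sq_nonneg (s-1)]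
  have ht0 : 0 < t := lt_trans (div_pos (by positivity) hDm) ht1
  have hA : 0 < t*(2*s^2+1+2*s) - s^2 := by
    have := (div_lt_iff₀ hDm).mp ht1; linarith
  have hB : 0 < s^2 - t*(2*s^2+1-2*s) := by
    have := (lt_div_iff₀ hDp).mp ht2; linarith
  have hQfact : -(s^2)^2*(1 - 2*t)^2 + 2*s^2*t - t^2
      = (t*(2*s^2+1+2*s) - s^2) * (s^2 - t*(2*s^2+1-2*s)) := by ring
  have hQpos : 0 < -(s^2)^2*(1 - 2*t)^2 + 2*s^2*t - t^2 := by
    rw [hQfact]; exact mul_pos hA hB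
  have hrApos : 0 < rA := by rw [hrA]; exact Real.sqrt_pos.2 hQpos
  have hrA2 : rA^2 = -(s^2)^2*(1 - 2*t)^2 + 2*s^2*t - t^2 := by
    rw [hrA]; exact Real.sq_sqrt hQpos.le
  set n : ℝ := s^2 - t - 2*s^2*t with hn
  have hrA2' : rA^2 = (2*s*t - n) * (2*s*t + n) := by rw [hrA2, hn]; ring
  have hrA2pos : 0 < (2*s*t - n) * (2*s*t + n) := hrA2' ▸ (by positivity : (0:ℝ) < rA^2)
  have hst : (0:ℝ) < 2*s*t := by positivity
  have hn1 : 0 < 2*s*t - n := by nlinarith [hrA2pos, hst, sq_nonneg (2*s*t - n)]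
  have hn2 : 0 < 2*s*t + n := by nlinarith [hrA2pos, hst, sq_nonneg (2*s*t + n)]
  -- exp v
  have hden : (0:ℝ) < 1 - n/(2*s*t) := by
    rw [sub_pos, div_lt_one hst]; linarith
  have hy : (1 + n/(2*s*t))/(1 - n/(2*s*t)) = (2*s*t + n)/(2*s*t - n) := by
    rw [div_eq_div_iff hden.ne' hn1.ne']; field_simp
  have hypos : 0 < (2*s*t + n)/(2*s*t - n) := div_pos hn2 hn1
  have hvn : v = 1/2 * Real.log ((2*s*t + n)/(2*s*t - n)) := by
    rw [hv, ← hy]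
  have hEv2 : Real.exp v ^ 2 = (2*s*t + n)/(2*s*t - n) := by
    rw [sq, ← Real.exp_add, hvn,
      show 1/2 * Real.log ((2*s*t + n)/(2*s*t - n)) + 1/2 * Real.log ((2*s*t + n)/(2*s*t - n))
        = Real.log ((2*s*t + n)/(2*s*t - n)) by ring,
      Real.exp_log hypos]
  have hEvrA : Real.exp v * rA = 2*s*t + n := by
    apply sqc (by positivity) hn2.le
    rw [mul_pow, hEv2, hrA2']; field_simp
  have hEvd : Real.exp v = (2*s*t + n)/rA := by
    rw [eq_div_iff hrApos.ne']; exact hEvrA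
  have hEnvd : Real.exp (-v) = (2*s*t - n)/rA := by
    rw [Real.exp_neg, hEvd, inv_div, div_eq_div_iff hn2.ne' hrApos.ne']
    linear_combination hrA2'
  -- exp u
  have hu' : u = -Real.log s := by
    rw [hu, Real.log_pow]; push_cast; ring
  have heud : Real.exp u = s⁻¹ := by rw [hu', Real.exp_neg, Real.exp_log hs0]
  have hexp2u : Real.exp (2*u) = Real.exp u * Real.exp u := by
    rw [two_mul, Real.exp_add]
  have heu1 : Real.exp u ≠ 1 := by
    rw [heud]; exact fun h => hsne1 (inv_eq_one.mp h)
  have hem1 : Real.exp u - 1 ≠ 0 := sub_ne_zero.2 heu1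
  have hep1 : Real.exp u + 1 ≠ 0 := by positivity
  have h1me : 1 - Real.exp u * Real.exp u ≠ 0 := by
    intro h
    have h2 : (Real.exp u - 1) * (Real.exp u + 1) = 0 := by linear_combination -h
    rcases mul_eq_zero.mp h2 with h3 | h3
    · exact hem1 h3
    · exact hep1 h3
  -- tanh(u/2)
  have hpne : Real.exp (u/2) ≠ 0 := (Real.exp_pos _).ne'
  have hp : Real.exp (u/2) * Real.exp (u/2) = Real.exp u := by
    rw [← Real.exp_add]; ring_nf
  have htanh : Real.tanh (u/2) = (Real.exp u - 1)/(Real.exp u + 1) := by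
    rw [Real.tanh_eq_sinh_div_cosh, Real.sinh_eq, Real.cosh_eq, Real.exp_neg, ← hp]
    have hne2 : Real.exp (u/2) + (Real.exp (u/2))⁻¹ ≠ 0 := by positivity
    field_simp
  -- a ≠ 0
  have haf : a = (Real.exp (-v)) * ((Real.exp u - 1)/(Real.exp u + 1)) := by
    rw [ha, htanh]
  have hane : a ≠ 0 := by
    rw [haf]
    exact mul_ne_zero (Real.exp_pos _).ne' (div_ne_zero hem1 hep1)
  -- EQ1
  have hone : (1:ℝ) - s^2 ≠ 0 := by
    intro h
    have h2 : (s - 1) * (s + 1) = 0 := by linear_combination -h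
    rcases mul_eq_zero.mp h2 with h3 | h3
    · exact hsne1 (by linarith)
    · linarith
  have hss1 : s*s - 1 ≠ 0 := by
    intro h; apply hone; linear_combination -h
  have EQ1 : ((s^2)^2*(2*t - 1) - s^2*(1 + t) + t)/((1 - s^2)*rA)
      = (2*Real.exp u*Real.cosh v + (1 + Real.exp (2*u))*Real.sinh v)
          /(1 - Real.exp (2*u)) := by
    have hinvne : 1 - s⁻¹*s⁻¹ ≠ 0 := by
      have he : 1 - s⁻¹*s⁻¹ = (s*s - 1)/(s*s) := by
        field_simp
      rw [he]
      exact div_ne_zero hss1 (by positivity)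
    rw [Real.cosh_eq, Real.sinh_eq, hEvd, hEnvd, hexp2u, heud, hn]
    rw [div_eq_div_iff (mul_ne_zero hone hrApos.ne') hinvne]
    field_simp
    ring
  -- EQ2
  have hBinv : Real.exp v = (Real.exp (-v))⁻¹ := by rw [Real.exp_neg, inv_inv]
  have EQ2 : (2*Real.exp u*Real.cosh v + (1 + Real.exp (2*u))*Real.sinh v)
          /(1 - Real.exp (2*u)) = (a^2 - 1)/(2*a) := by
    rw [Real.cosh_eq, Real.sinh_eq, hexp2u, haf, hBinv]
    have hAne : Real.exp (-v) ≠ 0 := (Real.exp_pos _).ne'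
    have h1me2 : 1 - Real.exp u ^ 2 ≠ 0 := by rw [sq]; exact h1me
    field_simp
    ring
  -- EQ3
  have hsq : Real.sqrt (1 + a^2) ^ 2 = 1 + a^2 := Real.sq_sqrt (by positivity)
  have hsqne : Real.sqrt (1 + a^2) ≠ 0 := by positivity
  have h1a : (1:ℝ) + a^2 ≠ 0 := by positivity
  have hsin2 : Real.sin (2*Real.arctan a) = 2*a/(1 + a^2) := by
    rw [Real.sin_two_mul, Real.sin_arctan, Real.cos_arctan, ← hsq]
    field_simp
    rw [Real.sqrt_sq (Real.sqrt_nonneg _)]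
  have hcos2 : Real.cos (2*Real.arctan a) = (1 - a^2)/(1 + a^2) := by
    rw [Real.cos_two_mul, Real.cos_arctan]
    rw [div_pow, one_pow, hsq]
    field_simp
    ring
  have EQ3 : Real.tan (-(π/2) + 2*Real.arctan a) = (a^2 - 1)/(2*a) := by
    rw [Real.tan_eq_sin_div_cos,
      show -(π/2) + 2*Real.arctan a = 2*Real.arctan a - π/2 by ring,
      Real.sin_sub, Real.cos_sub, Real.sin_pi_div_two, Real.cos_pi_div_two,
      hsin2, hcos2]
    field_simp
    ring
  exact ⟨hane, EQ1, EQ1.trans EQ2, EQ3.trans (EQ1.trans EQ2).symm⟩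
end

section
/- For R > 0 and t ∈ (0,1) one has the identity 4Rt² − (R − t − 2Rt)² = −R²(1−2t)² + 2Rt − t²; hence |(R − t − 2Rt)/(2√R·t)| < 1 if and only if t⁻(R) < t < t⁺(R). Moreover the map Φ(R,t) := ( −(1/2)·ln R , artanh((R − t − 2Rt)/(2√R·t)) ) is a bijection from D := {(R,t) : R > 0, t⁻(R) < t < t⁺(R)} onto ℝ², with inverse Ψ(u,v) := ( e^{−2u} , e^{−2u}/(1 + 2e^{−2u} + 2e^{−u}·tanh v) ); in particular, for fixed R the limits t → t⁻(R)⁺ and t → t⁺(R)⁻ correspond to v → +∞ and v → −∞ respectively. -/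
/-- The focus-focus parameter domain `D = {(R,t) : R > 0, t⁻(R) < t < t⁺(R)}`. -/
def FFdom : Set (ℝ × ℝ) := {x | 0 < x.1 ∧ tminus x.1 < x.2 ∧ x.2 < tplus x.1}

/-- `Φ(R,t) := (−(1/2)ln R, artanh((R − t − 2Rt)/(2√R·t)))`. -/
noncomputable def Phi : ℝ × ℝ → ℝ × ℝ :=
  fun x => (-(1/2)*Real.log x.1,
    artanh ((x.1 - x.2 - 2*x.1*x.2)/(2*Real.sqrt x.1*x.2)))

/-- `Ψ(u,v) := (e^{−2u}, e^{−2u}/(1 + 2e^{−2u} + 2e^{−u}·tanh v))`. -/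
noncomputable def Psi : ℝ × ℝ → ℝ × ℝ :=
  fun x => (Real.exp (-2*x.1),
    Real.exp (-2*x.1)/(1 + 2*Real.exp (-2*x.1) + 2*Real.exp (-x.1)*Real.tanh x.2))

open Filter Set

lemma dminus_pos {R : ℝ} (hR : 0 < R) : 0 < 2*R + 1 + 2*Real.sqrt R := by
  have := Real.sqrt_nonneg R; linarith

lemma dplus_pos {R : ℝ} (hR : 0 < R) : 0 < 2*R + 1 - 2*Real.sqrt R := by
  have hs : Real.sqrt R ^ 2 = R := Real.sq_sqrt hR.le
  nlinarith [Real.sqrt_nonneg R, sq_nonneg (Real.sqrt R - 1)]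

lemma tminus_pos {R : ℝ} (hR : 0 < R) : 0 < tminus R :=
  div_pos hR (dminus_pos hR)

lemma tplus_pos {R : ℝ} (hR : 0 < R) : 0 < tplus R :=
  div_pos hR (dplus_pos hR)

lemma sqrtR_pos {R : ℝ} (hR : 0 < R) : 0 < Real.sqrt R := Real.sqrt_pos.2 hR

/-- `w < 1 ↔ tminus R < t` for `R, t > 0`. -/
lemma w_lt_one_iff {R t : ℝ} (hR : 0 < R) (ht : 0 < t) :
    (R - t - 2*R*t)/(2*Real.sqrt R*t) < 1 ↔ tminus R < t := by
  have hs := sqrtR_pos hR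
  rw [div_lt_one (by positivity), tminus, div_lt_iff₀ (dminus_pos hR)]
  constructor <;> intro h <;> nlinarith

/-- `-1 < w ↔ t < tplus R` for `R, t > 0`. -/
lemma neg_one_lt_w_iff {R t : ℝ} (hR : 0 < R) (ht : 0 < t) :
    -1 < (R - t - 2*R*t)/(2*Real.sqrt R*t) ↔ t < tplus R := by
  have hs := sqrtR_pos hR
  rw [neg_lt, ← neg_div, div_lt_one (by positivity), tplus, lt_div_iff₀ (dplus_pos hR)]
  constructor <;> intro h <;> nlinarith

lemma abs_w_lt_one_iff {R t : ℝ} (hR : 0 < R) (ht : 0 < t) :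
    |(R - t - 2*R*t)/(2*Real.sqrt R*t)| < 1 ↔ tminus R < t ∧ t < tplus R := by
  rw [abs_lt, w_lt_one_iff hR ht, neg_one_lt_w_iff hR ht, and_comm]

lemma abs_tanh_lt_one (v : ℝ) : |Real.tanh v| < 1 := by
  have hc := Real.cosh_pos v
  have h := Real.cosh_sq_sub_sinh_sq v
  rw [Real.tanh_eq_sinh_div_cosh, abs_div, abs_of_pos hc, div_lt_one hc]
  nlinarith [abs_nonneg (Real.sinh v), sq_abs (Real.sinh v)]

lemma tanh_artanh {w : ℝ} (h : |w| < 1) : Real.tanh (artanh w) = w := by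
  rw [abs_lt] at h
  have h1 : 0 < 1 - w := by linarith
  have h2 : 0 < 1 + w := by linarith
  have hy : 0 < (1 + w)/(1 - w) := div_pos h2 h1
  set a := Real.exp (artanh w) with ha
  have hap : 0 < a := Real.exp_pos _
  have ha0 : a ≠ 0 := hap.ne'
  have hae : a * a * (1 - w) = 1 + w := by
    have haa : a * a = (1 + w)/(1 - w) := by
      rw [ha, ← Real.exp_add, artanh,
        show (1/2)*Real.log ((1+w)/(1-w)) + (1/2)*Real.log ((1+w)/(1-w))
          = Real.log ((1+w)/(1-w)) by ring,
        Real.exp_log hy]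
    rw [haa]; field_simp
  have hsum : (0:ℝ) < a + a⁻¹ := by positivity
  rw [Real.tanh_eq_sinh_div_cosh, Real.sinh_eq, Real.cosh_eq, Real.exp_neg, ← ha]
  rw [div_eq_iff (by positivity)]
  field_simp
  nlinarith [hae]

lemma artanh_tanh (v : ℝ) : artanh (Real.tanh v) = v := by
  have hc := Real.cosh_pos v
  have h1 : 1 + Real.tanh v = Real.exp v / Real.cosh v := by
    rw [Real.tanh_eq_sinh_div_cosh, ← Real.cosh_add_sinh]; field_simp
  have h2 : 1 - Real.tanh v = Real.exp (-v) / Real.cosh v := by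
    rw [Real.tanh_eq_sinh_div_cosh, ← Real.cosh_sub_sinh]; field_simp
  have h3 : Real.exp v / Real.cosh v / (Real.exp (-v) / Real.cosh v)
      = Real.exp (v - -v) := by
    rw [Real.exp_sub]; field_simp
  rw [artanh, h1, h2, h3, Real.log_exp]; ring

lemma psi_phi : ∀ x ∈ FFdom, Psi (Phi x) = x := by
  rintro ⟨R, t⟩ ⟨hR, h1, h2⟩
  simp only [FFdom, Set.mem_setOf_eq] at *
  have ht : 0 < t := (tminus_pos hR).trans h1
  have hs : 0 < Real.sqrt R := Real.sqrt_pos.2 hR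
  have hw : |(R - t - 2*R*t)/(2*Real.sqrt R*t)| < 1 := (abs_w_lt_one_iff hR ht).2 ⟨h1, h2⟩
  have e1 : Real.exp (-2 * (-(1/2)*Real.log R)) = R := by
    rw [show -2 * (-(1/2)*Real.log R) = Real.log R by ring, Real.exp_log hR]
  have e2 : Real.exp (-(-(1/2)*Real.log R)) = Real.sqrt R := by
    rw [show -(-(1/2)*Real.log R) = Real.log R / 2 by ring, ← Real.log_sqrt hR.le,
      Real.exp_log hs]
  simp only [Psi, Phi, e1, e2, tanh_artanh hw, Prod.mk.injEq]
  refine ⟨trivial, ?_⟩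
  have hden : 1 + 2*R + 2*Real.sqrt R*((R - t - 2*R*t)/(2*Real.sqrt R*t)) = R/t := by
    field_simp; ring
  rw [hden]
  field_simp

lemma phi_psi : ∀ y : ℝ × ℝ, Psi y ∈ FFdom ∧ Phi (Psi y) = y := by
  rintro ⟨u, v⟩
  set E := Real.exp (-2*u) with hE
  set e := Real.exp (-u) with he
  have hEp : 0 < E := Real.exp_pos _
  have hep : 0 < e := Real.exp_pos _
  have hee : e * e = E := by rw [he, hE, ← Real.exp_add]; ring_nf
  have hsq : Real.sqrt E = e := by
    rw [show E = e^2 by rw [sq, hee], Real.sqrt_sq hep.le]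
  set τ := Real.tanh v with hτ
  have hτlt := abs_tanh_lt_one v
  rw [abs_lt] at hτlt
  have hd : 0 < 1 + 2*E + 2*e*τ := by nlinarith [hτlt.1, sq_nonneg (e-1)]
  have hdm : 1 + 2*E + 2*e*τ < 2*E + 1 + 2*Real.sqrt E := by
    rw [hsq]; nlinarith [hτlt.2]
  have hdp : 2*E + 1 - 2*Real.sqrt E < 1 + 2*E + 2*e*τ := by
    rw [hsq]; nlinarith [hτlt.1]
  have hmem : Psi (u, v) ∈ FFdom := by
    refine ⟨hEp, ?_, ?_⟩
    · show tminus E < E/(1 + 2*E + 2*e*τ)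
      exact div_lt_div_of_pos_left hEp hd hdm
    · show E/(1 + 2*E + 2*e*τ) < tplus E
      exact div_lt_div_of_pos_left hEp (dplus_pos hEp) hdp
  refine ⟨hmem, ?_⟩
  set t := E/(1 + 2*E + 2*e*τ) with ht
  have hweq : (E - t - 2*E*t)/(2*Real.sqrt E*t) = τ := by
    rw [hsq, ht]
    have h1 : 1 + 2*E + 2*e*τ ≠ 0 := hd.ne'
    rw [div_eq_iff (mul_ne_zero (mul_ne_zero two_ne_zero hep.ne') (div_ne_zero hEp.ne' h1))]
    linear_combination (-E) * mul_inv_cancel₀ h1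
  show (-(1/2)*Real.log E, artanh ((E - t - 2*E*t)/(2*Real.sqrt E*t))) = (u, v)
  rw [hweq, hτ, artanh_tanh, hE, Real.log_exp, Prod.mk.injEq]
  exact ⟨by ring, rfl⟩

lemma artanh_tendsto_atTop : Tendsto artanh (nhdsWithin 1 (Set.Iio 1)) atTop := by
  have hnum : Tendsto (fun x : ℝ => 1 + x) (nhdsWithin 1 (Set.Iio 1)) (nhds 2) := by
    have hc : Continuous (fun x : ℝ => 1 + x) := by fun_prop
    have h := hc.tendsto 1
    norm_num at h
    exact h.mono_left nhdsWithin_le_nhds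
  have hden : Tendsto (fun x : ℝ => 1 - x) (nhdsWithin 1 (Set.Iio 1))
      (nhdsWithin 0 (Set.Ioi 0)) := by
    apply tendsto_nhdsWithin_of_tendsto_nhds_of_eventually_within
    · have hc : Continuous (fun x : ℝ => 1 - x) := by fun_prop
      have h := hc.tendsto 1
      norm_num at h
      exact h.mono_left nhdsWithin_le_nhds
    · exact eventually_mem_nhdsWithin.mono (fun x hx => by
        simp only [Set.mem_Iio] at hx
        simp only [Set.mem_Ioi]
        linarith)
  have hfrac : Tendsto (fun x : ℝ => (1+x)/(1-x)) (nhdsWithin 1 (Set.Iio 1)) atTop := by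
    simp only [div_eq_mul_inv]
    exact hnum.pos_mul_atTop (by norm_num) hden.inv_tendsto_nhdsGT_zero
  exact (Real.tendsto_log_atTop.comp hfrac).const_mul_atTop
    (by norm_num : (0:ℝ) < 1/2)

lemma artanh_tendsto_atBot : Tendsto artanh (nhdsWithin (-1) (Set.Ioi (-1))) atBot := by
  have hfrac : Tendsto (fun x : ℝ => (1+x)/(1-x)) (nhdsWithin (-1) (Set.Ioi (-1)))
      (nhdsWithin 0 (Set.Ioi 0)) := by
    apply tendsto_nhdsWithin_of_tendsto_nhds_of_eventually_within
    · have hcont : ContinuousAt (fun x : ℝ => (1+x)/(1-x)) (-1) :=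
        ContinuousAt.div (by fun_prop) (by fun_prop) (by norm_num)
      have h := hcont.tendsto
      norm_num at h
      exact h.mono_left nhdsWithin_le_nhds
    · refine Filter.eventually_of_mem
        (Ioo_mem_nhdsGT_of_mem ⟨le_rfl, (by norm_num : (-1:ℝ) < 1)⟩) ?_
      intro x hx
      obtain ⟨h1x, h2x⟩ := hx
      simp only [Set.mem_Ioi]
      exact div_pos (by linarith) (by linarith)
  exact (Real.tendsto_log_nhdsGT_zero.comp hfrac).const_mul_atBot
    (by norm_num : (0:ℝ) < 1/2)

lemma w_tendsto_tminus {R : ℝ} (hR : 0 < R) :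
    Tendsto (fun t : ℝ => (R - t - 2*R*t)/(2*Real.sqrt R*t))
      (nhdsWithin (tminus R) (Set.Ioi (tminus R))) (nhdsWithin 1 (Set.Iio 1)) := by
  have hs : 0 < Real.sqrt R := Real.sqrt_pos.2 hR
  have htm := tminus_pos hR
  apply tendsto_nhdsWithin_of_tendsto_nhds_of_eventually_within
  · have hcont : ContinuousAt (fun t : ℝ => (R - t - 2*R*t)/(2*Real.sqrt R*t)) (tminus R) :=
      ContinuousAt.div (by fun_prop) (by fun_prop) (by positivity)
    have hval : (R - tminus R - 2*R*tminus R)/(2*Real.sqrt R*tminus R) = 1 := by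
      rw [tminus]
      have hd := dminus_pos hR
      have hs2 : Real.sqrt R ^ 2 = R := Real.sq_sqrt hR.le
      rw [div_eq_one_iff_eq (by positivity)]
      field_simp
      nlinarith [hs2]
    have h := hcont.tendsto
    rw [hval] at h
    exact h.mono_left nhdsWithin_le_nhds
  · exact eventually_mem_nhdsWithin.mono (fun t ht => by
      have ht' : 0 < t := htm.trans ht
      exact (w_lt_one_iff hR ht').2 ht)

lemma w_tendsto_tplus {R : ℝ} (hR : 0 < R) :
    Tendsto (fun t : ℝ => (R - t - 2*R*t)/(2*Real.sqrt R*t))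
      (nhdsWithin (tplus R) (Set.Iio (tplus R))) (nhdsWithin (-1) (Set.Ioi (-1))) := by
  have hs : 0 < Real.sqrt R := Real.sqrt_pos.2 hR
  have htp := tplus_pos hR
  apply tendsto_nhdsWithin_of_tendsto_nhds_of_eventually_within
  · have hcont : ContinuousAt (fun t : ℝ => (R - t - 2*R*t)/(2*Real.sqrt R*t)) (tplus R) :=
      ContinuousAt.div (by fun_prop) (by fun_prop) (by positivity)
    have hval : (R - tplus R - 2*R*tplus R)/(2*Real.sqrt R*tplus R) = -1 := by
      rw [tplus]
      have hd := dplus_pos hR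
      have hs2 : Real.sqrt R ^ 2 = R := Real.sq_sqrt hR.le
      rw [div_eq_iff (by positivity)]
      linear_combination (-R) * mul_inv_cancel₀ hd.ne'
    have h := hcont.tendsto
    rw [hval] at h
    exact h.mono_left nhdsWithin_le_nhds
  · refine Filter.eventually_of_mem
      (Ioo_mem_nhdsLT_of_mem ⟨htp, le_rfl⟩) ?_
    intro t ht
    exact (neg_one_lt_w_iff hR ht.1).2 ht.2

lemma lims {R : ℝ} (hR : 0 < R) :
    Tendsto (fun t : ℝ => artanh ((R - t - 2*R*t)/(2*Real.sqrt R*t)))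
      (nhdsWithin (tminus R) (Set.Ioi (tminus R))) atTop ∧
    Tendsto (fun t : ℝ => artanh ((R - t - 2*R*t)/(2*Real.sqrt R*t)))
      (nhdsWithin (tplus R) (Set.Iio (tplus R))) atBot :=
  ⟨artanh_tendsto_atTop.comp (w_tendsto_tminus hR),
   artanh_tendsto_atBot.comp (w_tendsto_tplus hR)⟩

/-- For `R > 0` and `t ∈ (0,1)` one has
`4Rt² − (R − t − 2Rt)² = −R²(1−2t)² + 2Rt − t²`, hence
`|(R − t − 2Rt)/(2√R·t)| < 1` iff `t⁻(R) < t < t⁺(R)`. Moreover `Φ` is a bijection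
from `D := {(R,t) : R > 0, t⁻(R) < t < t⁺(R)}` onto `ℝ²` with inverse `Ψ`; and for
fixed `R` the limits `t → t⁻(R)⁺` and `t → t⁺(R)⁻` correspond to `v → +∞` and
`v → −∞` respectively. -/
theorem stmt_18 :
    (∀ R t : ℝ, 0 < R → 0 < t → t < 1 →
      (4*R*t^2 - (R - t - 2*R*t)^2 = -R^2*(1 - 2*t)^2 + 2*R*t - t^2) ∧
      (|(R - t - 2*R*t)/(2*Real.sqrt R*t)| < 1 ↔ tminus R < t ∧ t < tplus R)) ∧
    Set.BijOn Phi FFdom Set.univ ∧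
    (∀ x ∈ FFdom, Psi (Phi x) = x) ∧
    (∀ y : ℝ × ℝ, Psi y ∈ FFdom ∧ Phi (Psi y) = y) ∧
    (∀ R : ℝ, 0 < R →
      Filter.Tendsto (fun t : ℝ => artanh ((R - t - 2*R*t)/(2*Real.sqrt R*t)))
        (nhdsWithin (tminus R) (Set.Ioi (tminus R))) Filter.atTop ∧
      Filter.Tendsto (fun t : ℝ => artanh ((R - t - 2*R*t)/(2*Real.sqrt R*t)))
        (nhdsWithin (tplus R) (Set.Iio (tplus R))) Filter.atBot) := by
  refine ⟨fun R t hR ht _ => ⟨by ring, abs_w_lt_one_iff hR ht⟩,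
    ⟨fun _ _ => trivial, fun x hx y hy h => by rw [← psi_phi x hx, ← psi_phi y hy, h],
      fun y _ => ⟨Psi y, (phi_psi y).1, (phi_psi y).2⟩⟩,
    psi_phi, phi_psi, fun R hR => lims hR⟩
end

section
/- Let R₁, R₂ > 0, R := R₂/R₁, t⁻(R) < t < t⁺(R), κ := √(R₁R₂), u := −(1/2)·ln R and v := artanh((R − t − 2Rt)/(2√R·t)). Then the height invariant formula of Theorem C can be rewritten in the coordinates (u,v): 2·min(R₁,R₂) + (R₁/(πt))·( rA − 2Rt·(π/2 − arctan((R−t)/rA)) − 2t·(π/2 − arctan((R+t−2Rt)/rA)) ) = κ·( 2e^{−|u|} + 2/(π·cosh v) − (2e^{u}/π)·(π/2 − arctan(sinh v + e^{u}·cosh v)) − (2e^{−u}/π)·(π/2 − arctan(sinh v + e^{−u}·cosh v)) ). In particular the right-hand side is invariant under u ↦ −u, expressing the symmetry of the height invariant between the standard (R₁ < R₂) and reverse (R₁ > R₂) coupled angular momenta. -/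
open Real

/-- The height invariant expressed in the coordinates `(u,v)` with scale `κ`:
`κ(2e^{−|u|} + 2/(π cosh v) − (2e^u/π)(π/2 − arctan(sinh v + e^u cosh v))
  − (2e^{−u}/π)(π/2 − arctan(sinh v + e^{−u} cosh v)))`. -/
noncomputable def heightUV (κ u v : ℝ) : ℝ :=
  κ * (2*Real.exp (-|u|) + 2/(Real.pi*Real.cosh v)
    - (2*Real.exp u/Real.pi)
        *(Real.pi/2 - Real.arctan (Real.sinh v + Real.exp u*Real.cosh v))
    - (2*Real.exp (-u)/Real.pi)
        *(Real.pi/2 - Real.arctan (Real.sinh v + Real.exp (-u)*Real.cosh v)))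

set_option maxHeartbeats 1000000 in
/-- Let `R₁, R₂ > 0`, `R := R₂/R₁`, `t⁻(R) < t < t⁺(R)`, `κ := √(R₁R₂)`,
`u := −(1/2)ln R`, `v := artanh((R−t−2Rt)/(2√R·t))`. Then the height invariant of
Theorem C can be rewritten in the coordinates `(u,v)`:
`2min(R₁,R₂) + (R₁/(πt))(rA − 2Rt(π/2 − arctan((R−t)/rA))
    − 2t(π/2 − arctan((R+t−2Rt)/rA))) = heightUV κ u v`,
and the right-hand side is invariant under `u ↦ −u`. -/
theorem stmt_19 (R₁ R₂ t : ℝ) (hR₁ : 0 < R₁) (hR₂ : 0 < R₂)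
    (R : ℝ) (hR : R = R₂/R₁)
    (ht : tminus R < t ∧ t < tplus R)
    (κ : ℝ) (hκ : κ = Real.sqrt (R₁*R₂))
    (rA : ℝ) (hrA : rA = Real.sqrt (-R^2*(1 - 2*t)^2 + 2*R*t - t^2))
    (u v : ℝ)
    (hu : u = -(1/2)*Real.log R)
    (hv : v = _root_.artanh ((R - t - 2*R*t)/(2*Real.sqrt R*t))) :
    2*min R₁ R₂ + (R₁/(π*t)) * (rA - 2*R*t*(π/2 - Real.arctan ((R - t)/rA))
        - 2*t*(π/2 - Real.arctan ((R + t - 2*R*t)/rA)))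
      = heightUV κ u v ∧
    (∀ u' v' : ℝ, heightUV κ (-u') v' = heightUV κ u' v') := by
  refine ⟨?_, fun u' v' => by unfold heightUV; rw [abs_neg, neg_neg]; ring⟩
  have hRpos : 0 < R := by rw [hR]; positivity
  set s := Real.sqrt R with hs
  have hspos : 0 < s := Real.sqrt_pos.2 hRpos
  have hs2 : s^2 = R := Real.sq_sqrt hRpos.le
  clear_value s
  have hd1 : 0 < 2*R + 1 + 2*s := by positivity
  have hd2 : 0 < 2*R + 1 - 2*s := by nlinarith [sq_nonneg (s-1)]
  obtain ⟨htm, htp⟩ := ht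
  rw [tminus, ← hs] at htm; rw [tplus, ← hs] at htp
  have hA : 0 < t*(2*R+1+2*s) - R := by
    rw [div_lt_iff₀ hd1] at htm; linarith
  have hB : 0 < R - t*(2*R+1-2*s) := by
    rw [lt_div_iff₀ hd2] at htp; linarith
  have htpos : 0 < t := by nlinarith
  have key : (t*(2*R+1+2*s) - R) * (R - t*(2*R+1-2*s))
      = -R^2*(1-2*t)^2 + 2*R*t - t^2 := by linear_combination (4*t^2)*hs2
  have hP : 0 < -R^2*(1-2*t)^2 + 2*R*t - t^2 := key ▸ mul_pos hA hB
  have rApos : 0 < rA := by rw [hrA]; exact Real.sqrt_pos.2 hP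
  have hrA2 : rA^2 = -R^2*(1-2*t)^2 + 2*R*t - t^2 := by
    rw [hrA]; exact Real.sq_sqrt hP.le
  set N := R - t - 2*R*t with hNdef
  clear_value N
  have hN : N^2 + rA^2 = (2*s*t)^2 := by
    rw [hrA2, hNdef]; linear_combination (-4*t^2)*hs2
  have hst : 0 < 2*s*t := by positivity
  have h1N : 0 < 2*s*t - N := by nlinarith [mul_pos rApos rApos]
  have h2N : 0 < 2*s*t + N := by nlinarith [mul_pos rApos rApos]
  have hb : 0 < 1 - N/(2*s*t) := by
    rw [sub_pos, div_lt_one hst]; linarith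
  have hq : (1 + N/(2*s*t))/(1 - N/(2*s*t)) = (2*s*t + N)/(2*s*t - N) := by
    rw [div_eq_div_iff hb.ne' h1N.ne']
    field_simp
  have hqpos : 0 < (2*s*t+N)/(2*s*t-N) := div_pos h2N h1N
  have hEv : Real.exp v = Real.sqrt ((2*s*t+N)/(2*s*t-N)) := by
    have hvv : v + v = Real.log ((2*s*t+N)/(2*s*t-N)) := by
      rw [hv, _root_.artanh, hq]; ring
    have h2 : Real.exp v ^ 2 = (2*s*t+N)/(2*s*t-N) := by
      rw [sq, ← Real.exp_add, hvv, Real.exp_log hqpos]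
    calc Real.exp v = Real.sqrt (Real.exp v ^ 2) :=
          (Real.sqrt_sq (Real.exp_pos v).le).symm
      _ = _ := by rw [h2]
  have hEv' : Real.exp (-v) = Real.sqrt ((2*s*t-N)/(2*s*t+N)) := by
    have hvv : (-v) + (-v) = Real.log ((2*s*t-N)/(2*s*t+N)) := by
      rw [hv, _root_.artanh, hq, Real.log_div h2N.ne' h1N.ne',
        Real.log_div h1N.ne' h2N.ne']
      ring
    have hqpos' : 0 < (2*s*t-N)/(2*s*t+N) := div_pos h1N h2N
    have h2 : Real.exp (-v) ^ 2 = (2*s*t-N)/(2*s*t+N) := by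
      rw [sq, ← Real.exp_add, hvv, Real.exp_log hqpos']
    calc Real.exp (-v) = Real.sqrt (Real.exp (-v) ^ 2) :=
          (Real.sqrt_sq (Real.exp_pos _).le).symm
      _ = _ := by rw [h2]
  have hE1 : Real.exp v * (2*s*t - N) = rA := by
    calc Real.exp v * (2*s*t-N)
        = Real.sqrt ((2*s*t+N)/(2*s*t-N)) * Real.sqrt ((2*s*t-N)^2) := by
          rw [hEv, Real.sqrt_sq h1N.le]
      _ = Real.sqrt ((2*s*t+N)/(2*s*t-N) * (2*s*t-N)^2) :=
          (Real.sqrt_mul hqpos.le _).symm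
      _ = Real.sqrt (rA^2) := by
          congr 1
          rw [div_mul_eq_mul_div, div_eq_iff h1N.ne']
          linear_combination (N - 2*s*t)*hN
      _ = rA := Real.sqrt_sq rApos.le
  have hE2 : Real.exp (-v) * (2*s*t + N) = rA := by
    calc Real.exp (-v) * (2*s*t+N)
        = Real.sqrt ((2*s*t-N)/(2*s*t+N)) * Real.sqrt ((2*s*t+N)^2) := by
          rw [hEv', Real.sqrt_sq h2N.le]
      _ = Real.sqrt ((2*s*t-N)/(2*s*t+N) * (2*s*t+N)^2) :=
          (Real.sqrt_mul (div_pos h1N h2N).le _).symm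
      _ = Real.sqrt (rA^2) := by
          congr 1
          rw [div_mul_eq_mul_div, div_eq_iff h2N.ne']
          linear_combination (-(N + 2*s*t))*hN
      _ = rA := Real.sqrt_sq rApos.le
  have e1 : Real.exp v = rA/(2*s*t - N) := by
    rw [eq_div_iff h1N.ne']; exact hE1
  have e2 : Real.exp (-v) = rA/(2*s*t + N) := by
    rw [eq_div_iff h2N.ne']; exact hE2
  have hcosh : Real.cosh v = 2*s*t/rA := by
    rw [Real.cosh_eq, e1, e2]
    rw [div_add_div _ _ h1N.ne' h2N.ne', div_div, div_eq_div_iff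
      (by positivity) rApos.ne']
    linear_combination (4*s*t)*hN
  have hsinh : Real.sinh v = N/rA := by
    rw [Real.sinh_eq, e1, e2]
    rw [div_sub_div _ _ h1N.ne' h2N.ne', div_div, div_eq_div_iff
      (by positivity) rApos.ne']
    linear_combination (2*N)*hN
  have hexpu : Real.exp u = s⁻¹ := by
    have hus : u = Real.log s⁻¹ := by
      rw [hu, Real.log_inv, hs, Real.log_sqrt hRpos.le]; ring
    rw [hus, Real.exp_log (by positivity)]
  have hexpnu : Real.exp (-u) = s := by
    rw [Real.exp_neg, hexpu, inv_inv]
  have hκs : κ = R₁ * s := by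
    rw [hκ, hs, show R₁*R₂ = R₁^2*R by rw [hR]; field_simp,
      Real.sqrt_mul (sq_nonneg R₁), Real.sqrt_sq hR₁.le]
  have hR₂ : R₂ = R₁ * R := by rw [hR]; field_simp
  have hmin : min R₁ R₂ = κ * Real.exp (-|u|) := by
    rcases abs_cases u with ⟨h1, h2⟩ | ⟨h1, h2⟩
    · have hRle : R ≤ 1 := by
        by_contra h
        push_neg at h
        have := Real.log_pos h
        rw [hu] at h2; linarith
      have hle : R₂ ≤ R₁ := by
        rw [hR₂]; exact mul_le_of_le_one_right hR₁.le hRle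
      rw [min_eq_right hle, h1, hexpnu, hκs, hR₂]
      linear_combination (-R₁)*hs2
    · have hRge : 1 < R := by
        by_contra h
        push_neg at h
        have := Real.log_nonpos hRpos.le h
        rw [hu] at h2; linarith
      have hle : R₁ ≤ R₂ := by
        rw [hR₂]; exact le_mul_of_one_le_right hR₁.le hRge.le
      rw [min_eq_left hle, h1, neg_neg, hexpu, hκs]
      field_simp
  have harg1 : N/rA + s⁻¹*(2*s*t/rA) = (R + t - 2*R*t)/rA := by
    rw [show s⁻¹*(2*s*t/rA) = 2*t/rA by field_simp, ← add_div]
    congr 1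
    rw [hNdef]; ring
  have harg2 : N/rA + s*(2*s*t/rA) = (R - t)/rA := by
    rw [show s*(2*s*t/rA) = 2*s^2*t/rA by ring, ← add_div]
    congr 1
    rw [hNdef]; linear_combination (2*t)*hs2
  rw [heightUV, hexpu, hexpnu, hcosh, hsinh, harg1, harg2, hmin, hκs]
  set X := Real.arctan ((R - t)/rA) with hX
  set Y := Real.arctan ((R + t - 2*R*t)/rA) with hY
  set E₀ := Real.exp (-|u|) with hE₀
  rw [← hs2]
  have hπ : (0:ℝ) < Real.pi := Real.pi_pos
  field_simp
  ring
end
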